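/- arXiv:2402.16676 — 7 statements merged into one kernel-verified Lean document; each statement's English description precedes it below -/
import Mathlib

section
/- Let A be a bialgebra over a field k and ξ : A → A an algebra endomorphism. Define B_ξ = { x ∈ A | (ξ⊗id)(Δ(x)) = Δ(x) }. Then B_ξ is a right coideal subalgebra of A (i.e. a subalgebra with Δ(B_ξ) ⊆ B_ξ ⊗ A), B_ξ is contained in the fixed-point subalgebra A^ξ = { x ∈ A | ξ(x) = x }, and every right coideal subalgebra C of A with C ⊆ A^ξ satisfies C ⊆ B_ξ. In other words, B_ξ is the maximal right coideal subalgebra of A contained in A^ξ. -/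
open TensorProduct

section Defs
variable (k A : Type*) [CommSemiring k] [Semiring A]

section Alg
variable [Algebra k A]

noncomputable def emb12 : A ⊗[k] A →ₐ[k] A ⊗[k] (A ⊗[k] A) :=
  Algebra.TensorProduct.map (AlgHom.id k A) Algebra.TensorProduct.includeLeft

noncomputable def emb13 : A ⊗[k] A →ₐ[k] A ⊗[k] (A ⊗[k] A) :=
  Algebra.TensorProduct.map (AlgHom.id k A) Algebra.TensorProduct.includeRight

noncomputable def emb23 : A ⊗[k] A →ₐ[k] A ⊗[k] (A ⊗[k] A) :=
  Algebra.TensorProduct.includeRight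

noncomputable def flip2 : A ⊗[k] A ≃ₐ[k] A ⊗[k] A := Algebra.TensorProduct.comm k A A

noncomputable def psiL (ψ : A ≃ₐ[k] A) : A ⊗[k] A →ₐ[k] A ⊗[k] A :=
  Algebra.TensorProduct.map ψ.toAlgHom (AlgHom.id k A)

noncomputable def psiR (ψ : A ≃ₐ[k] A) : A ⊗[k] A →ₐ[k] A ⊗[k] A :=
  Algebra.TensorProduct.map (AlgHom.id k A) ψ.toAlgHom

noncomputable def psiBoth (ψ : A ≃ₐ[k] A) : A ⊗[k] A →ₐ[k] A ⊗[k] A :=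
  Algebra.TensorProduct.map ψ.toAlgHom ψ.toAlgHom

noncomputable def sub2 (B : Subalgebra k A) : Submodule k (A ⊗[k] A) :=
  Submodule.span k {t : A ⊗[k] A | ∃ x ∈ B, ∃ y : A, t = x ⊗ₜ[k] y}

end Alg

variable [Bialgebra k A]

noncomputable def cop : A →ₐ[k] A ⊗[k] A := Bialgebra.comulAlgHom k A

noncomputable def copOp : A →ₐ[k] A ⊗[k] A := (flip2 k A).toAlgHom.comp (cop k A)

noncomputable def cou : A →ₐ[k] k := Bialgebra.counitAlgHom k A

noncomputable def copL : A ⊗[k] A →ₐ[k] A ⊗[k] (A ⊗[k] A) :=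
  (Algebra.TensorProduct.assoc k k k A A A).toAlgHom.comp
    (Algebra.TensorProduct.map (cop k A) (AlgHom.id k A))

noncomputable def copR : A ⊗[k] A →ₐ[k] A ⊗[k] (A ⊗[k] A) :=
  Algebra.TensorProduct.map (AlgHom.id k A) (cop k A)

noncomputable def couL : A ⊗[k] A →ₐ[k] A :=
  (Algebra.TensorProduct.lid k A).toAlgHom.comp
    (Algebra.TensorProduct.map (cou k A) (AlgHom.id k A))

noncomputable def couR : A ⊗[k] A →ₐ[k] A :=
  (Algebra.TensorProduct.rid k k A).toAlgHom.comp
    (Algebra.TensorProduct.map (AlgHom.id k A) (cou k A))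

structure QTriangular (R : A ⊗[k] A) : Prop where
  isUnit : IsUnit R
  intertwine : ∀ x : A, R * cop k A x = copOp k A x * R
  coproduct_left : copL k A R = emb13 k A R * emb23 k A R
  coproduct_right : copR k A R = emb13 k A R * emb12 k A R

end Defs

section Bxi
variable (k A : Type*) [CommSemiring k] [Semiring A] [Bialgebra k A]

/-- `B_ξ = { x ∈ A | (ξ ⊗ id)(Δ(x)) = Δ(x) }` -/
noncomputable def Bxi (ξ : A →ₐ[k] A) : Set A :=
  {x : A | Algebra.TensorProduct.map ξ (AlgHom.id k A) (cop k A x) = cop k A x}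

/-- the subspace `S ⊗ A ⊆ A ⊗ A` spanned by tensors with first leg in a subset `S` -/
noncomputable def setSub2 (S : Set A) : Submodule k (A ⊗[k] A) :=
  Submodule.span k {t : A ⊗[k] A | ∃ x ∈ S, ∃ y : A, t = x ⊗ₜ[k] y}

end Bxi

/-!
`B_ξ` is the equalizer of the algebra maps `(ξ ⊗ id) ∘ Δ` and `Δ`, hence a subalgebra, and applying
`id ⊗ ε` to its defining equation gives `ξ x = x`. By coassociativity, `Δ x` lies in the equalizer of
`((ξ ⊗ id) ∘ Δ) ⊗ id` and `Δ ⊗ id` for `x ∈ B_ξ`; since `A` is flat over the field `k`, that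
equalizer is `B_ξ ⊗ A`. Conversely, if `Δ(C) ⊆ C ⊗ A` and `ξ` fixes `C`, then `ξ ⊗ id` fixes
`C ⊗ A`, in particular every `Δ c`.
-/

open LinearMap

section Flat
variable {R M N P : Type*} [CommRing R] [AddCommGroup M] [AddCommGroup N] [AddCommGroup P]
  [Module R M] [Module R N] [Module R P]

theorem Module.Flat.eqLocus_rTensor_eq [Module.Flat R P] (f g : M →ₗ[R] N) :
    eqLocus (f.rTensor P) (g.rTensor P) = range ((eqLocus f g).subtype.rTensor P) := by
  rw [eqLocus_eq_ker_sub, eqLocus_eq_ker_sub, ← rTensor_sub, ← exact_iff]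
  exact Module.Flat.rTensor_exact P (exact_subtype_ker_map _)

end Flat

section Span
variable {R M N : Type*} [CommSemiring R] [AddCommMonoid M] [AddCommMonoid N]
  [Module R M] [Module R N]

theorem range_rTensor_subtype_le_span_tmul (p : Submodule R M) :
    range (p.subtype.rTensor N) ≤ Submodule.span R {t | ∃ x ∈ p, ∃ y : N, t = x ⊗ₜ[R] y} := by
  rw [range_eq_map, ← span_tmul_eq_top, Submodule.map_span_le]
  rintro _ ⟨x, y, rfl⟩
  exact Submodule.subset_span ⟨x, x.2, y, rfl⟩

theorem rTensor_eq_self_of_mem_span_tmul {φ : M →ₗ[R] M} {S : Set M} (hS : ∀ x ∈ S, φ x = x)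
    {t : M ⊗[R] N} (ht : t ∈ Submodule.span R {t | ∃ x ∈ S, ∃ y : N, t = x ⊗ₜ[R] y}) :
    φ.rTensor N t = t := by
  suffices h : Submodule.span R {t | ∃ x ∈ S, ∃ y : N, t = x ⊗ₜ[R] y} ≤
      eqLocus (φ.rTensor N) LinearMap.id from h ht
  rw [Submodule.span_le]
  rintro _ ⟨x, hx, y, rfl⟩
  simp [hS x hx]

end Span

section Coalgebra
open Coalgebra
variable {R A : Type*} [CommSemiring R] [AddCommMonoid A] [Module R A] [Coalgebra R A]

theorem eq_of_rTensor_comul_eq_comul {φ : A →ₗ[R] A} {x : A}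
    (h : φ.rTensor A (comul x) = comul x) : φ x = x := by
  have h' := congrArg (fun t => TensorProduct.rid R A ((counit (A := A)).lTensor A t)) h
  simp only [← LinearMap.comp_apply (lTensor A _) (rTensor A φ), lTensor_comp_rTensor,
    ← rTensor_comp_lTensor, LinearMap.comp_apply, lTensor_counit_comul] at h'
  simpa using h'

theorem rTensor_rTensor_comul_comul_eq {φ : A →ₗ[R] A} {x : A}
    (h : φ.rTensor A (comul x) = comul x) :
    (φ.rTensor A).rTensor A ((comul (R := R)).rTensor A (comul x)) =
      (comul (R := R)).rTensor A (comul x) := by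
  apply (TensorProduct.assoc R A A A).injective
  have hassoc : ∀ t, TensorProduct.assoc R A A A ((φ.rTensor A).rTensor A t) =
      φ.rTensor (A ⊗[R] A) (TensorProduct.assoc R A A A t) := fun t => by
    simp [rTensor_tensor]
  rw [hassoc, coassoc_apply, ← LinearMap.comp_apply, rTensor_comp_lTensor, ← lTensor_comp_rTensor,
    LinearMap.comp_apply, h, ← coassoc_apply]

end Coalgebra

/-- For a bialgebra `A` and an algebra endomorphism `ξ` of `A`, the set
`B_ξ = { x | (ξ⊗id)(Δ(x)) = Δ(x) }` is a right coideal subalgebra of `A` contained in the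
fixed-point subalgebra `A^ξ`, and it contains every right coideal subalgebra of `A`
contained in `A^ξ`; i.e. `B_ξ` is the maximal such subalgebra. -/
theorem Bxi_maximal_coideal_subalgebra
    {k A : Type*} [Field k] [Ring A] [Bialgebra k A] (ξ : A →ₐ[k] A) :
    -- B_ξ is a subalgebra
    ((1 : A) ∈ Bxi k A ξ) ∧
    (∀ x ∈ Bxi k A ξ, ∀ y ∈ Bxi k A ξ, x * y ∈ Bxi k A ξ) ∧
    (∀ x ∈ Bxi k A ξ, ∀ y ∈ Bxi k A ξ, x + y ∈ Bxi k A ξ) ∧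
    (∀ c : k, ∀ x ∈ Bxi k A ξ, c • x ∈ Bxi k A ξ) ∧
    -- B_ξ is a right coideal: Δ(B_ξ) ⊆ B_ξ ⊗ A
    (∀ x ∈ Bxi k A ξ, cop k A x ∈ setSub2 k A (Bxi k A ξ)) ∧
    -- B_ξ ⊆ A^ξ
    (∀ x ∈ Bxi k A ξ, ξ x = x) ∧
    -- maximality: every right coideal subalgebra contained in A^ξ lies in B_ξ
    (∀ C : Subalgebra k A,
      (∀ c ∈ C, cop k A c ∈ setSub2 k A (C : Set A)) →
      (∀ c ∈ C, ξ c = c) →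
      ∀ c ∈ C, c ∈ Bxi k A ξ) := by
  let B := AlgHom.equalizer ((Algebra.TensorProduct.map ξ (AlgHom.id k A)).comp (cop k A)) (cop k A)
  refine ⟨B.one_mem, fun _ hx _ hy => B.mul_mem hx hy, fun _ hx _ hy => B.add_mem hx hy,
    fun c _ hx => B.smul_mem hx c, fun x hx => ?_,
    fun _ hx => eq_of_rTensor_comul_eq_comul hx,
    fun C hC hfix c hc => rTensor_eq_self_of_mem_span_tmul hfix (hC c hc)⟩
  have hB : Bxi k A ξ = eqLocus (ξ.toLinearMap.rTensor A ∘ₗ Coalgebra.comul) Coalgebra.comul :=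
    rfl
  rw [hB]
  apply range_rTensor_subtype_le_span_tmul
  rw [← Module.Flat.eqLocus_rTensor_eq, mem_eqLocus, rTensor_comp, comp_apply]
  exact rTensor_rTensor_comul_comul_eq hx
end

section
/- Let H be a Hopf algebra over a field k that is generated as an algebra by primitive elements. Then every coideal subalgebra H' of H (i.e. a subalgebra with Δ(H') ⊆ H' ⊗ H) is a Hopf subalgebra of H; in particular it is closed under the antipode S. -/
open TensorProduct

section Prim
variable (k A : Type*) [CommSemiring k] [Semiring A] [Bialgebra k A]

/-- primitive elements: `Δ(x) = x ⊗ 1 + 1 ⊗ x` -/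
noncomputable def IsPrim (x : A) : Prop :=
  cop k A x = x ⊗ₜ[k] (1 : A) + (1 : A) ⊗ₜ[k] x

/-- the subspace `S ⊗ S ⊆ A ⊗ A` spanned by tensors with both legs in a subset `S` -/
noncomputable def setSub22 (S : Set A) : Submodule k (A ⊗[k] A) :=
  Submodule.span k {t : A ⊗[k] A | ∃ x ∈ S, ∃ y ∈ S, t = x ⊗ₜ[k] y}

end Prim

/-!
A Hopf algebra generated by primitives is cocommutative, so `Δ C ⊆ (C ⊗ H) ∩ (H ⊗ C) = C ⊗ C`.
Put `V = k·1 + span (primitives)`, so that `H = ⋃ Vⁿ`; the Leibniz rule for `c ↦ Δ c - c ⊗ 1`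
gives `Δ c - c ⊗ 1 ∈ Vⁿ ⊗ H` for `c ∈ Vⁿ⁺¹`. For `c ∈ C ∩ Vⁿ⁺¹` this element then lies in
`(Vⁿ ∩ C) ⊗ C`, and applying `m ∘ (S ⊗ id)` to `Δ c = c ⊗ 1 + ∑ aᵢ ⊗ bᵢ` gives
`S c = ε(c) - ∑ S(aᵢ) bᵢ ∈ C` by induction on `n`.
-/

open TensorProduct LinearMap Submodule

local notation:70 P:71 " ⊗ₛ " Q:71 => Submodule.map₂ (TensorProduct.mk _ _ _) P Q

section TensorSubmodules

variable {k M N M' N' : Type*}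

section CommRing

variable [CommRing k] [AddCommGroup M] [AddCommGroup N] [AddCommGroup M'] [AddCommGroup N']
  [Module k M] [Module k N] [Module k M'] [Module k N']

theorem range_rTensor_eq_map₂ (f : M' →ₗ[k] M) :
    range (f.rTensor N) = (range f ⊗ₛ (⊤ : Submodule k N)) := by
  rw [LinearMap.rTensor, TensorProduct.range_map, range_id]

theorem range_lTensor_eq_map₂ (g : N' →ₗ[k] N) :
    range (g.lTensor M) = ((⊤ : Submodule k M) ⊗ₛ range g) := by
  rw [LinearMap.lTensor, TensorProduct.range_map, range_id]

theorem comm_mem_map₂_mk {P : Submodule k M} {Q : Submodule k N} {t : M ⊗[k] N}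
    (ht : t ∈ P ⊗ₛ Q) : TensorProduct.comm k M N t ∈ Q ⊗ₛ P :=
  (map₂_le.2 fun _ hp _ hq => apply_mem_map₂ _ hq hp :
    (P ⊗ₛ Q) ≤ (Q ⊗ₛ P).comap (TensorProduct.comm k M N).toLinearMap) ht

end CommRing

variable [Field k] [AddCommGroup M] [AddCommGroup N] [Module k M] [Module k N]

theorem map₂_mk_top_inf_map₂_mk_top_le (P P' : Submodule k M) :
    ((P ⊗ₛ (⊤ : Submodule k N)) ⊓ (P' ⊗ₛ ⊤)) ≤ (P ⊓ P') ⊗ₛ ⊤ := by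
  intro t ht
  obtain ⟨ht, ht'⟩ := mem_inf.1 ht
  rw [← range_subtype P, ← range_rTensor_eq_map₂] at ht
  obtain ⟨s, rfl⟩ := ht
  rw [← range_subtype P', ← range_rTensor_eq_map₂, ← rTensor_mkQ, mem_ker,
    ← LinearMap.comp_apply, ← rTensor_comp, ← mem_ker] at ht'
  -- `P ∩ P' → P → M ⧸ P'` stays exact after tensoring with `N`
  obtain ⟨u, rfl⟩ := (Module.Flat.rTensor_exact N
    (LinearMap.exact_subtype_ker_map (P'.mkQ ∘ₗ P.subtype))).linearMap_ker_eq ▸ ht'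
  rw [← LinearMap.comp_apply, ← rTensor_comp]
  have hu := range_rTensor_eq_map₂ (N := N) (P.subtype ∘ₗ (P'.mkQ ∘ₗ P.subtype).ker.subtype) ▸
    mem_range_self _ u
  refine map₂_le_map₂_left ?_ hu
  rintro _ ⟨⟨⟨x, hxP⟩, hx⟩, rfl⟩
  exact ⟨hxP, by simpa using hx⟩

theorem map₂_mk_top_inf_map₂_top_mk_le (P : Submodule k M) (Q : Submodule k N) :
    ((P ⊗ₛ ⊤) ⊓ ((⊤ : Submodule k M) ⊗ₛ Q)) ≤ P ⊗ₛ Q := by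
  intro t ht
  obtain ⟨ht, ht'⟩ := mem_inf.1 ht
  rw [← range_subtype P, ← range_rTensor_eq_map₂] at ht
  obtain ⟨s, rfl⟩ := ht
  rw [← range_subtype Q, ← range_lTensor_eq_map₂, ← lTensor_mkQ, mem_ker,
    ← LinearMap.comp_apply, lTensor_comp_rTensor, ← rTensor_comp_lTensor,
    LinearMap.comp_apply] at ht'
  -- `P ⊗ (N ⧸ Q) → M ⊗ (N ⧸ Q)` is injective
  have hs : Q.mkQ.lTensor P s = 0 :=
    Module.Flat.rTensor_preserves_injective_linearMap _ P.injective_subtype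
      (ht'.trans (map_zero _).symm)
  rw [← mem_ker, lTensor_mkQ] at hs
  obtain ⟨u, rfl⟩ := hs
  rw [← LinearMap.comp_apply, rTensor_comp_lTensor, ← range_mapIncl]
  exact mem_range_self _ u

end TensorSubmodules

theorem Submodule.exists_mem_pow_of_mem_adjoin {k A : Type*} [CommSemiring k] [Semiring A]
    [Algebra k A] {V : Submodule k A} (hV : 1 ≤ V) {x : A}
    (hx : x ∈ Algebra.adjoin k (V : Set A)) : ∃ n, x ∈ V ^ n := by
  induction hx using Algebra.adjoin_induction with
  | mem x hx => exact ⟨1, by rwa [pow_one]⟩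
  | algebraMap r => exact ⟨0, by rw [pow_zero]; exact algebraMap_mem r⟩
  | add x y _ _ hx hy =>
    obtain ⟨m, hm⟩ := hx
    obtain ⟨n, hn⟩ := hy
    exact ⟨max m n, add_mem (pow_le_pow_right' hV (le_max_left m n) hm)
      (pow_le_pow_right' hV (le_max_right m n) hn)⟩
  | mul x y _ _ hx hy =>
    obtain ⟨m, hm⟩ := hx
    obtain ⟨n, hn⟩ := hy
    exact ⟨m + n, pow_add V m n ▸ mul_mem_mul hm hn⟩

theorem map₂_mk_top_mul_map₂_mk_top_le {k A B : Type*} [CommSemiring k] [Semiring A] [Semiring B]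
    [Algebra k A] [Algebra k B] (P Q : Submodule k A) :
    (P ⊗ₛ (⊤ : Submodule k B)) * (Q ⊗ₛ ⊤) ≤ (P * Q) ⊗ₛ ⊤ := by
  refine mul_le.2 fun s hs t ht => ?_
  refine (map₂_le.2 fun a ha b _ => ?_ :
    P ⊗ₛ (⊤ : Submodule k B) ≤ ((P * Q) ⊗ₛ ⊤).comap (mulRight k t)) hs
  refine (map₂_le.2 fun c hc d _ => ?_ :
    Q ⊗ₛ (⊤ : Submodule k B) ≤ ((P * Q) ⊗ₛ ⊤).comap (mulLeft k (a ⊗ₜ b))) ht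
  rw [mem_comap, mulLeft_apply, mk_apply, Algebra.TensorProduct.tmul_mul_tmul]
  exact apply_mem_map₂ _ (mul_mem_mul ha hc) mem_top

section Filtration

variable {k H : Type*} [CommRing k] [Ring H] [Bialgebra k H]

variable (k H) in
noncomputable def comulSubTmulOne : H →ₗ[k] H ⊗[k] H :=
  (cop k H).toLinearMap - (TensorProduct.mk k H H).flip 1

theorem comulSubTmulOne_apply (c : H) : comulSubTmulOne k H c = cop k H c - c ⊗ₜ 1 := rfl

theorem comulSubTmulOne_mul (a b : H) :
    comulSubTmulOne k H (a * b) =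
      comulSubTmulOne k H a * cop k H b + (a ⊗ₜ 1) * comulSubTmulOne k H b := by
  simp only [comulSubTmulOne_apply, map_mul, sub_mul, mul_sub,
    Algebra.TensorProduct.tmul_mul_tmul, mul_one]
  abel

theorem pow_succ_le_comap_comulSubTmulOne {V : Submodule k H}
    (hcop : V ≤ (V ⊗ₛ ⊤).comap (cop k H).toLinearMap)
    (hV : V ≤ ((1 : Submodule k H) ⊗ₛ ⊤).comap (comulSubTmulOne k H)) (n : ℕ) :
    V ^ (n + 1) ≤ (V ^ n ⊗ₛ ⊤).comap (comulSubTmulOne k H) := by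
  induction n with
  | zero => rwa [pow_one, pow_zero]
  | succ n ih =>
    refine pow_succ V (n + 1) ▸ mul_le.2 fun a ha b hb => ?_
    rw [mem_comap, comulSubTmulOne_mul]
    refine add_mem ?_ ?_
    · exact pow_succ V n ▸ map₂_mk_top_mul_map₂_mk_top_le _ _ (mul_mem_mul (ih ha) (hcop hb))
    · exact mul_one (V ^ (n + 1)) ▸ map₂_mk_top_mul_map₂_mk_top_le _ _
        (mul_mem_mul (apply_mem_map₂ _ ha mem_top) (hV hb))

variable (k H) in
noncomputable def scalarsSupPrimitives : Submodule k H := 1 ⊔ span k {x | IsPrim k H x}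

theorem scalarsSupPrimitives_le_comap_cop :
    scalarsSupPrimitives k H ≤ (scalarsSupPrimitives k H ⊗ₛ ⊤).comap (cop k H).toLinearMap := by
  have h1 : (1 : H) ∈ scalarsSupPrimitives k H := one_le.1 le_sup_left
  refine sup_le (one_le.2 ?_) (span_le.2 fun x hx => ?_)
  · simpa [Algebra.TensorProduct.one_def] using apply_mem_map₂ (mk k H H) h1 mem_top
  · simp only [SetLike.mem_coe, mem_comap, AlgHom.toLinearMap_apply]
    rw [hx]
    exact add_mem (apply_mem_map₂ _ (mem_sup_right (subset_span hx)) mem_top)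
      (apply_mem_map₂ _ h1 mem_top)

theorem scalarsSupPrimitives_le_comap_comulSubTmulOne :
    scalarsSupPrimitives k H ≤ ((1 : Submodule k H) ⊗ₛ ⊤).comap (comulSubTmulOne k H) := by
  refine sup_le (one_le.2 ?_) (span_le.2 fun x hx => ?_)
  · simp [comulSubTmulOne_apply, Algebra.TensorProduct.one_def]
  · simp only [SetLike.mem_coe, mem_comap, comulSubTmulOne_apply]
    rw [hx, add_sub_cancel_left]
    exact apply_mem_map₂ _ (one_le.1 le_rfl) mem_top

end Filtration

section Hopf

variable {k H : Type*}

theorem setSub2_eq_map₂ [CommSemiring k] [Semiring H] [Bialgebra k H] (P : Submodule k H) :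
    setSub2 k H (P : Set H) = P ⊗ₛ ⊤ := by
  rw [setSub2, ← span_univ, ← P.span_eq, map₂_span_span, P.span_eq]
  congr 1
  ext t
  simp [Set.mem_image2, eq_comm]

theorem setSub22_eq_map₂ [CommSemiring k] [Semiring H] [Bialgebra k H] (P : Submodule k H) :
    setSub22 k H (P : Set H) = P ⊗ₛ P := by
  rw [setSub22, ← P.span_eq, map₂_span_span, P.span_eq]
  congr 1
  ext t
  simp [Set.mem_image2, eq_comm]

theorem copOp_eq_cop_of_adjoin_isPrim_eq_top [CommSemiring k] [Semiring H] [Bialgebra k H]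
    (hgen : Algebra.adjoin k {x : H | IsPrim k H x} = ⊤) : copOp k H = cop k H :=
  AlgHom.ext_of_adjoin_eq_top hgen fun x (hx : IsPrim k H x) => by
    simp [copOp, flip2, show cop k H x = _ from hx, add_comm]

variable [Field k] [Ring H]

theorem cop_mem_map₂_of_copOp_eq_cop [Bialgebra k H] (hcomm : copOp k H = cop k H)
    {P : Submodule k H} (hP : ∀ c ∈ P, cop k H c ∈ P ⊗ₛ ⊤) {c : H} (hc : c ∈ P) :
    cop k H c ∈ P ⊗ₛ P := by
  have hflip : copOp k H c ∈ (⊤ : Submodule k H) ⊗ₛ P := comm_mem_map₂_mk (hP c hc)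
  exact map₂_mk_top_inf_map₂_top_mk_le P P ⟨hP c hc, hcomm ▸ hflip⟩

variable [HopfAlgebra k H]

theorem antipode_mem_of_mem_pow (C : Subalgebra k H)
    (hC : ∀ c ∈ C, cop k H c ∈ Subalgebra.toSubmodule C ⊗ₛ Subalgebra.toSubmodule C)
    {V : Submodule k H} (hV : ∀ n, V ^ (n + 1) ≤ (V ^ n ⊗ₛ ⊤).comap (comulSubTmulOne k H))
    (n : ℕ) {c : H} (hc : c ∈ C) (hcV : c ∈ V ^ n) : HopfAlgebra.antipode k c ∈ C := by
  induction n generalizing c with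
  | zero =>
    obtain ⟨r, rfl⟩ := mem_one.1 (pow_zero V ▸ hcV)
    rw [Algebra.algebraMap_eq_smul_one, map_smul, HopfAlgebra.antipode_one]
    exact C.smul_mem C.one_mem r
  | succ n ih =>
    set C' := Subalgebra.toSubmodule C
    set θ : H ⊗[k] H →ₗ[k] H := LinearMap.mul' k H ∘ₗ (HopfAlgebra.antipode k).rTensor H
    have hc1 : c ⊗ₜ[k] (1 : H) ∈ C' ⊗ₛ C' := apply_mem_map₂ _ hc C.one_mem
    have hφ : comulSubTmulOne k H c ∈ C' ⊗ₛ C' := sub_mem (hC c hc) hc1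
    have hφ' : comulSubTmulOne k H c ∈ (V ^ n ⊓ C') ⊗ₛ C' :=
      map₂_mk_top_inf_map₂_top_mk_le _ _
        ⟨map₂_mk_top_inf_map₂_mk_top_le _ _
          ⟨hV n hcV, map₂_le_map₂_right le_top hφ⟩, map₂_le_map₂_left le_top hφ⟩
    have hθ : θ (comulSubTmulOne k H c) ∈ C :=
      (map₂_le.2 fun a ha b hb => by simpa [θ, C'] using C.mul_mem (ih ha.2 ha.1) hb :
        (V ^ n ⊓ C') ⊗ₛ C' ≤ C'.comap θ) hφ'
    have hS : HopfAlgebra.antipode k c =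
        algebraMap k H (Coalgebra.counit c) - θ (comulSubTmulOne k H c) := by
      simp [θ, comulSubTmulOne_apply, cop, Bialgebra.comulAlgHom_apply]
    exact hS ▸ sub_mem (C.algebraMap_mem _) hθ

end Hopf

/-- If a Hopf algebra `H` over a field is generated as an algebra by its
primitive elements, then every (right) coideal subalgebra `H'` of `H` is a Hopf
subalgebra: `Δ(H') ⊆ H' ⊗ H'` and `H'` is closed under the antipode `S`. -/
theorem coideal_subalgebra_of_primitively_generated_is_Hopf
    {k H : Type*} [Field k] [Ring H] [HopfAlgebra k H]
    (hgen : Algebra.adjoin k {x : H | IsPrim k H x} = ⊤)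
    (C : Subalgebra k H)
    (hcoideal : ∀ c ∈ C, cop k H c ∈ setSub2 k H (C : Set H)) :
    (∀ c ∈ C, cop k H c ∈ setSub22 k H (C : Set H)) ∧
    (∀ c ∈ C, HopfAlgebra.antipode (R := k) c ∈ C) := by
  set C' := Subalgebra.toSubmodule C
  have hcomm := copOp_eq_cop_of_adjoin_isPrim_eq_top hgen
  have hC (c : H) (hc : c ∈ C) : cop k H c ∈ C' ⊗ₛ C' :=
    cop_mem_map₂_of_copOp_eq_cop hcomm (fun c hc => setSub2_eq_map₂ C' ▸ hcoideal c hc) hc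
  refine ⟨fun c hc => setSub22_eq_map₂ C' ▸ hC c hc, fun c hc => ?_⟩
  have hadjoin : Algebra.adjoin k (scalarsSupPrimitives k H : Set H) = ⊤ :=
    top_le_iff.1 (hgen ▸ Algebra.adjoin_mono fun x hx => mem_sup_right (subset_span hx))
  obtain ⟨n, hn⟩ := exists_mem_pow_of_mem_adjoin le_sup_left (hadjoin ▸ Algebra.mem_top (x := c))
  exact antipode_mem_of_mem_pow C hC (pow_succ_le_comap_comulSubTmulOne
    scalarsSupPrimitives_le_comap_cop scalarsSupPrimitives_le_comap_comulSubTmulOne) n hc hn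
end

section
/- Let (A, B, ψ, J, K) be a cylindrical bialgebra. Then K satisfies the generalized reflection equation R^{ψψ}_{21} · (1 ⊗ K) · R^ψ · (K ⊗ 1) = (K ⊗ 1) · R^ψ_{21} · (1 ⊗ K) · R in A ⊗ A, where R^ψ = (ψ⊗id)(R), R^{ψψ} = (ψ⊗ψ)(R), and the subscript 21 denotes the flip of tensor factors. -/
open TensorProduct

section QSP
variable (k A : Type*) [CommSemiring k] [Semiring A] [Bialgebra k A]

/-- A twist pair `(ψ, J)`: `J` is a Drinfeld twist and `A^{cop,ψ} = A_J` as
quasitriangular bialgebras. -/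
structure TwistPair (R : A ⊗[k] A) (ψ : A ≃ₐ[k] A) (J Jinv : A ⊗[k] A) : Prop where
  mul_inv : J * Jinv = 1
  inv_mul : Jinv * J = 1
  cocycle : emb12 k A J * copL k A J = emb23 k A J * copR k A J
  counit_left : couL k A J = 1
  counit_right : couR k A J = 1
  compat_coproduct : ∀ x : A, psiBoth k A ψ (copOp k A (ψ.symm x)) = J * cop k A x * Jinv
  compat_R : psiBoth k A ψ (flip2 k A R) = flip2 k A J * R * Jinv

structure Cylindrical (R : A ⊗[k] A) (B : Subalgebra k A) (ψ : A ≃ₐ[k] A)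
    (J Jinv : A ⊗[k] A) (K : A) : Prop where
  qt : QTriangular k A R
  coideal : ∀ b ∈ B, cop k A b ∈ sub2 k A B
  twist : TwistPair k A R ψ J Jinv
  isUnitK : IsUnit K
  intertwine : ∀ b ∈ B, K * b = ψ b * K
  coproduct : cop k A K = Jinv * ((1 : A) ⊗ₜ[k] K) * psiL k A ψ R * (K ⊗ₜ[k] (1 : A))

/-- A reflection bialgebra `(A, B, ψ, J, 𝕂)`, the universal tensor K-matrix `𝕂` being
an element of `B ⊗ A ⊆ A ⊗ A`. -/
structure Reflection (R : A ⊗[k] A) (B : Subalgebra k A) (ψ : A ≃ₐ[k] A)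
    (J Jinv : A ⊗[k] A) (TK : A ⊗[k] A) : Prop where
  qt : QTriangular k A R
  coideal : ∀ b ∈ B, cop k A b ∈ sub2 k A B
  twist : TwistPair k A R ψ J Jinv
  support : TK ∈ sub2 k A B
  isUnitTK : IsUnit TK
  intertwine : ∀ b ∈ B, TK * cop k A b = psiR k A ψ (cop k A b) * TK
  coproduct_left : copL k A TK =
    emb23 k A (flip2 k A (psiL k A ψ R)) * emb13 k A TK * emb23 k A R
  coproduct_right : copR k A TK =
    emb23 k A Jinv * emb13 k A TK * emb23 k A (psiL k A ψ R) * emb12 k A TK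

end QSP

section Lemmas
variable {k A : Type*} [CommSemiring k] [Semiring A]

theorem flip2_psiBoth [Algebra k A] (ψ : A ≃ₐ[k] A) (x : A ⊗[k] A) :
    flip2 k A (psiBoth k A ψ x) = psiBoth k A ψ (flip2 k A x) :=
  Algebra.TensorProduct.comm_comp_map_apply _ _ x

variable [Bialgebra k A] {R J Jinv : A ⊗[k] A} {ψ : A ≃ₐ[k] A}

theorem TwistPair.flip2_psiBoth_R (h : TwistPair k A R ψ J Jinv) :
    flip2 k A (psiBoth k A ψ R) = flip2 k A J * R * Jinv := by
  rw [flip2_psiBoth, h.compat_R]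

theorem TwistPair.flip2_mul_flip2_inv (h : TwistPair k A R ψ J Jinv) :
    flip2 k A J * flip2 k A Jinv = 1 := by
  rw [← map_mul, h.mul_inv, map_one]

theorem Cylindrical.copOp_K {B : Subalgebra k A} {K : A}
    (h : Cylindrical k A R B ψ J Jinv K) :
    copOp k A K = flip2 k A Jinv * (K ⊗ₜ[k] (1 : A)) * flip2 k A (psiL k A ψ R) *
      ((1 : A) ⊗ₜ[k] K) := by
  change flip2 k A (cop k A K) = _
  simp only [h.coproduct, map_mul, flip2, Algebra.TensorProduct.comm_tmul]

end Lemmas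

/-- In a cylindrical bialgebra `(A, B, ψ, J, K)` the basic K-matrix `K`
satisfies the generalized reflection equation
`R^{ψψ}₂₁ · (1 ⊗ K) · R^ψ · (K ⊗ 1) = (K ⊗ 1) · R^ψ₂₁ · (1 ⊗ K) · R` in `A ⊗ A`. -/
theorem cylindrical_generalized_reflection_equation
    {k A : Type*} [Field k] [Ring A] [Bialgebra k A]
    (R : A ⊗[k] A) (B : Subalgebra k A) (ψ : A ≃ₐ[k] A) (J Jinv : A ⊗[k] A) (K : A)
    (hcyl : Cylindrical k A R B ψ J Jinv K) :
    flip2 k A (psiBoth k A ψ R) * ((1 : A) ⊗ₜ[k] K) * psiL k A ψ R * (K ⊗ₜ[k] (1 : A)) =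
      (K ⊗ₜ[k] (1 : A)) * flip2 k A (psiL k A ψ R) * ((1 : A) ⊗ₜ[k] K) * R := by
  -- Multiply `R Δ(K) = Δ^op(K) R` on the left by `J₂₁`.
  calc flip2 k A (psiBoth k A ψ R) * ((1 : A) ⊗ₜ[k] K) * psiL k A ψ R * (K ⊗ₜ[k] (1 : A))
      = flip2 k A J * (R * cop k A K) := by
        rw [hcyl.twist.flip2_psiBoth_R, hcyl.coproduct]
        simp only [mul_assoc]
    _ = flip2 k A J * (copOp k A K * R) := by rw [hcyl.qt.intertwine]
    _ = flip2 k A J * flip2 k A Jinv *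
        ((K ⊗ₜ[k] (1 : A)) * flip2 k A (psiL k A ψ R) * ((1 : A) ⊗ₜ[k] K) * R) := by
        rw [hcyl.copOp_K]
        simp only [mul_assoc]
    _ = (K ⊗ₜ[k] (1 : A)) * flip2 k A (psiL k A ψ R) * ((1 : A) ⊗ₜ[k] K) * R := by
        rw [hcyl.twist.flip2_mul_flip2_inv, one_mul]
end

section
/- Let (A, B, ψ, J, 𝕂) be a reflection bialgebra. Then 𝕂 satisfies the generalized reflection equation R^{ψψ}_{32} · 𝕂_{13} · R^ψ_{23} · 𝕂_{12} = 𝕂_{12} · R^ψ_{32} · 𝕂_{13} · R_{23} in B ⊗ A ⊗ A. -/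
open TensorProduct

/-!
Apply the intertwining property (i) of `𝕂` to `𝕂` itself: since `𝕂 ∈ B ⊗ A`, it extends factorwise
to `𝕂₁₂ · (Δ ⊗ id)(𝕂) = (id ⊗ ψ ⊗ id)((Δ ⊗ id)(𝕂)) · 𝕂₁₂`. Expanding `(Δ ⊗ id)(𝕂)` by the
coproduct formula (ii) on both sides gives the generalized reflection equation.
-/

section GeneralizedReflection
variable {k A : Type*} [CommSemiring k] [Semiring A]

section Algebra
variable [Algebra k A]

noncomputable def psiMid (ψ : A ≃ₐ[k] A) : A ⊗[k] (A ⊗[k] A) →ₐ[k] A ⊗[k] (A ⊗[k] A) :=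
  Algebra.TensorProduct.map (AlgHom.id k A) (psiL k A ψ)

lemma psiMid_emb12 (ψ : A ≃ₐ[k] A) (t : A ⊗[k] A) :
    psiMid ψ (emb12 k A t) = emb12 k A (psiR k A ψ t) := by
  induction t using TensorProduct.induction_on with
  | zero => simp
  | tmul a b => simp [psiMid, emb12, psiR, psiL]
  | add x y hx hy => simp only [map_add, hx, hy]

lemma psiMid_emb13 (ψ : A ≃ₐ[k] A) (t : A ⊗[k] A) :
    psiMid ψ (emb13 k A t) = emb13 k A t := by
  induction t using TensorProduct.induction_on with
  | zero => simp
  | tmul a b => simp [psiMid, emb13, psiL]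
  | add x y hx hy => simp only [map_add, hx, hy]

lemma psiMid_emb23 (ψ : A ≃ₐ[k] A) (t : A ⊗[k] A) :
    psiMid ψ (emb23 k A t) = emb23 k A (psiL k A ψ t) := by
  induction t using TensorProduct.induction_on with
  | zero => simp
  | tmul a b => simp [psiMid, emb23, psiL]
  | add x y hx hy => simp only [map_add, hx, hy]

lemma psiMid_one_tmul_one_tmul (ψ : A ≃ₐ[k] A) (y : A) :
    psiMid ψ ((1 : A) ⊗ₜ[k] ((1 : A) ⊗ₜ[k] y)) = (1 : A) ⊗ₜ[k] ((1 : A) ⊗ₜ[k] y) := by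
  simp [psiMid, psiL]

lemma psiL_flip2_psiL (ψ : A ≃ₐ[k] A) (t : A ⊗[k] A) :
    psiL k A ψ (flip2 k A (psiL k A ψ t)) = flip2 k A (psiBoth k A ψ t) := by
  induction t using TensorProduct.induction_on with
  | zero => simp
  | tmul a b => simp [psiL, psiBoth, flip2]
  | add x y hx hy => simp only [map_add, hx, hy]

lemma assoc_tmul_eq_emb12_mul (s : A ⊗[k] A) (y : A) :
    Algebra.TensorProduct.assoc k k k A A A (s ⊗ₜ[k] y) =
      emb12 k A s * ((1 : A) ⊗ₜ[k] ((1 : A) ⊗ₜ[k] y)) := by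
  induction s using TensorProduct.induction_on with
  | zero => simp
  | tmul a b => simp [emb12, Algebra.TensorProduct.tmul_mul_tmul]
  | add x z hx hz => simp only [TensorProduct.add_tmul, map_add, add_mul, hx, hz]

lemma commute_emb12_one_tmul_one_tmul (s : A ⊗[k] A) (y : A) :
    Commute (emb12 k A s) ((1 : A) ⊗ₜ[k] ((1 : A) ⊗ₜ[k] y)) := by
  induction s using TensorProduct.induction_on with
  | zero => simp
  | tmul a b => simp [Commute, SemiconjBy, emb12, Algebra.TensorProduct.tmul_mul_tmul]
  | add x z hx hz => simpa only [map_add] using hx.add_left hz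

end Algebra

variable [Bialgebra k A]

lemma copL_tmul (x y : A) :
    copL k A (x ⊗ₜ[k] y) = emb12 k A (cop k A x) * ((1 : A) ⊗ₜ[k] ((1 : A) ⊗ₜ[k] y)) := by
  rw [← assoc_tmul_eq_emb12_mul]
  simp [copL]

lemma emb12_mul_copL_of_intertwine {B : Subalgebra k A} {ψ : A ≃ₐ[k] A} {T : A ⊗[k] A}
    (hT : ∀ b ∈ B, T * cop k A b = psiR k A ψ (cop k A b) * T)
    {t : A ⊗[k] A} (ht : t ∈ sub2 k A B) :
    emb12 k A T * copL k A t = psiMid ψ (copL k A t) * emb12 k A T := by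
  induction ht using Submodule.span_induction with
  | mem t hmem =>
    obtain ⟨x, hx, y, rfl⟩ := hmem
    calc emb12 k A T * copL k A (x ⊗ₜ[k] y)
        = emb12 k A (psiR k A ψ (cop k A x)) *
            (emb12 k A T * ((1 : A) ⊗ₜ[k] ((1 : A) ⊗ₜ[k] y))) := by
          rw [copL_tmul, ← mul_assoc, ← map_mul, hT x hx, map_mul, mul_assoc]
      _ = psiMid ψ (copL k A (x ⊗ₜ[k] y)) * emb12 k A T := by
          rw [(commute_emb12_one_tmul_one_tmul T y).eq, copL_tmul, map_mul, psiMid_emb12,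
            psiMid_one_tmul_one_tmul, mul_assoc]
  | zero => simp
  | add a b _ _ ha hb => simp only [map_add, mul_add, add_mul, ha, hb]
  | smul c a _ ha => simp only [map_smul, smul_mul_assoc, mul_smul_comm, ha]

end GeneralizedReflection

/-- In a reflection bialgebra `(A, B, ψ, J, 𝕂)` the universal tensor
K-matrix `𝕂` satisfies the generalized reflection equation
`R^{ψψ}₃₂ · 𝕂₁₃ · R^ψ₂₃ · 𝕂₁₂ = 𝕂₁₂ · R^ψ₃₂ · 𝕂₁₃ · R₂₃` in `B ⊗ A ⊗ A ⊆ A^{⊗3}`. -/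
theorem reflection_generalized_reflection_equation
    {k A : Type*} [Field k] [Ring A] [Bialgebra k A]
    (R : A ⊗[k] A) (B : Subalgebra k A) (ψ : A ≃ₐ[k] A) (J Jinv TK : A ⊗[k] A)
    (hrefl : Reflection k A R B ψ J Jinv TK) :
    emb23 k A (flip2 k A (psiBoth k A ψ R)) * emb13 k A TK *
        emb23 k A (psiL k A ψ R) * emb12 k A TK =
      emb12 k A TK * emb23 k A (flip2 k A (psiL k A ψ R)) *
        emb13 k A TK * emb23 k A R := by
  have h := emb12_mul_copL_of_intertwine hrefl.intertwine hrefl.support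
  rw [hrefl.coproduct_left, map_mul, map_mul, psiMid_emb23, psiMid_emb13, psiMid_emb23,
    psiL_flip2_psiL] at h
  simpa only [mul_assoc] using h.symm
end

section
/- Let (A, B, ψ, J, 𝕂) be a reflection bialgebra and set K = (ε⊗id)(𝕂) ∈ A. Then (A, B, ψ, J, K) is a cylindrical bialgebra, i.e. K is invertible, K·b = ψ(b)·K for all b ∈ B, and Δ(K) = J^{-1}·(1⊗K)·R^ψ·(K⊗1). Moreover the factorization 𝕂 = R^ψ_{21}·(1⊗K)·R holds in A ⊗ A. -/
open TensorProduct

/-! Applying `ε ⊗ id ⊗ id` to the two coproduct identities of `𝕂` collapses every factor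
`𝕂₁₃` to `1 ⊗ K`, `𝕂₁₂` to `K ⊗ 1` and every factor living in legs 2 and 3 to itself, while the
counit axiom `(ε ⊗ id) ∘ Δ = id` turns the left-hand sides into `𝕂` and `Δ(K)`. Hence
`(Δ ⊗ id)(𝕂) = R^ψ₃₂ 𝕂₁₃ R₂₃` yields the factorization of `𝕂`, and
`(id ⊗ Δ)(𝕂) = J⁻¹₂₃ 𝕂₁₃ R^ψ₂₃ 𝕂₁₂` yields the coproduct formula for `K`. Applying the
algebra map `ε ⊗ id` to `𝕂 Δ(b) = (id ⊗ ψ)(Δ(b)) 𝕂` gives `K b = ψ(b) K`. -/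

section CounitLeft

variable (k A : Type*) [CommSemiring k] [Semiring A] [Bialgebra k A]

noncomputable def counitLeft (M : Type*) [Semiring M] [Algebra k M] : A ⊗[k] M →ₐ[k] M :=
  (Algebra.TensorProduct.lid k M).toAlgHom.comp
    (Algebra.TensorProduct.map (cou k A) (AlgHom.id k M))

variable {k A}

@[simp]
lemma counitLeft_tmul {M : Type*} [Semiring M] [Algebra k M] (a : A) (m : M) :
    counitLeft k A M (a ⊗ₜ[k] m) = Coalgebra.counit (R := k) a • m := by
  simp [counitLeft, cou]

@[simp]
lemma couL_tmul (a b : A) : couL k A (a ⊗ₜ[k] b) = Coalgebra.counit (R := k) a • b :=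
  counitLeft_tmul a b

lemma couL_eq_lid_rTensor_counit (x : A ⊗[k] A) :
    couL k A x = TensorProduct.lid k A (Coalgebra.counit.rTensor A x) := by
  induction x using TensorProduct.induction_on <;> simp_all

lemma couL_cop (a : A) : couL k A (cop k A a) = a := by
  rw [couL_eq_lid_rTensor_counit]
  simp [cop, Coalgebra.rTensor_counit_comul]

lemma couL_psiR (ψ : A ≃ₐ[k] A) (t : A ⊗[k] A) :
    couL k A (psiR k A ψ t) = ψ (couL k A t) := by
  induction t using TensorProduct.induction_on <;> simp_all [psiR]

lemma counitLeft_emb23 (t : A ⊗[k] A) : counitLeft k A (A ⊗[k] A) (emb23 k A t) = t := by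
  simp [emb23]

lemma counitLeft_emb13 (t : A ⊗[k] A) :
    counitLeft k A (A ⊗[k] A) (emb13 k A t) = (1 : A) ⊗ₜ[k] couL k A t := by
  induction t using TensorProduct.induction_on <;> simp_all [emb13, tmul_add]

lemma counitLeft_emb12 (t : A ⊗[k] A) :
    counitLeft k A (A ⊗[k] A) (emb12 k A t) = couL k A t ⊗ₜ[k] (1 : A) := by
  induction t using TensorProduct.induction_on <;> simp_all [emb12, add_tmul, smul_tmul']

lemma counitLeft_copR (t : A ⊗[k] A) :
    counitLeft k A (A ⊗[k] A) (copR k A t) = cop k A (couL k A t) := by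
  induction t using TensorProduct.induction_on <;> simp_all [copR]

lemma counitLeft_assoc (x : A ⊗[k] A) (b : A) :
    counitLeft k A (A ⊗[k] A) (Algebra.TensorProduct.assoc k k k A A A (x ⊗ₜ[k] b)) =
      couL k A x ⊗ₜ[k] b := by
  induction x using TensorProduct.induction_on <;> simp_all [add_tmul, smul_tmul']

lemma counitLeft_copL (t : A ⊗[k] A) : counitLeft k A (A ⊗[k] A) (copL k A t) = t := by
  induction t using TensorProduct.induction_on <;> simp_all [copL, counitLeft_assoc, couL_cop]

end CounitLeft

/-- A reflection bialgebra `(A, B, ψ, J, 𝕂)` induces a cylindrical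
bialgebra `(A, B, ψ, J, K)` with `K = (ε ⊗ id)(𝕂)`, and the factorization
`𝕂 = R^ψ₂₁ · (1 ⊗ K) · R` holds. -/
theorem reflection_to_cylindrical
    {k A : Type*} [Field k] [Ring A] [Bialgebra k A]
    (R : A ⊗[k] A) (B : Subalgebra k A) (ψ : A ≃ₐ[k] A) (J Jinv TK : A ⊗[k] A)
    (hrefl : Reflection k A R B ψ J Jinv TK) :
    Cylindrical k A R B ψ J Jinv (couL k A TK) ∧
    TK = flip2 k A (psiL k A ψ R) * ((1 : A) ⊗ₜ[k] (couL k A TK)) * R := by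
  have factorization := congr(counitLeft k A (A ⊗[k] A) $hrefl.coproduct_left)
  rw [counitLeft_copL, map_mul, map_mul, counitLeft_emb23, counitLeft_emb13,
    counitLeft_emb23] at factorization
  have intertwine (b : A) (hb : b ∈ B) : couL k A TK * b = ψ b * couL k A TK := by
    simpa only [map_mul, couL_cop, couL_psiR] using congr(couL k A $(hrefl.intertwine b hb))
  have coproduct := congr(counitLeft k A (A ⊗[k] A) $hrefl.coproduct_right)
  rw [counitLeft_copR, map_mul, map_mul, map_mul, counitLeft_emb23, counitLeft_emb13,
    counitLeft_emb23, counitLeft_emb12] at coproduct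
  exact ⟨⟨hrefl.qt, hrefl.coideal, hrefl.twist, hrefl.isUnitTK.map (couL k A), intertwine,
    coproduct⟩, factorization⟩
end

section
/- Let A be a quasitriangular bialgebra with coproduct Δ and R-matrix R. Consider the bialgebra A^{cop} ⊗ A with coproduct (2 3)∘(Δ^op ⊗ Δ) and R-matrix R_{31}·R_{24} ∈ (A^{cop}⊗A)^{⊗2}; it is quasitriangular, and Δ(A) ⊆ A^{cop} ⊗ A is a right coideal subalgebra. Moreover, the triple (ψ, J, K) = ((1 2), 1⊗1, R) — where (1 2) is the flip algebra automorphism of A^{cop} ⊗ A — is a cylindrical structure on (A^{cop} ⊗ A, Δ(A)): (i) ((1 2), 1⊗1) is a twist pair; (ii) R·Δ(x) = (1 2)(Δ(x))·R for all x ∈ A; (iii) the coproduct of K = R under (2 3)∘(Δ^op⊗Δ) equals (1⊗K)·R'^ψ·(K⊗1), where R'^ψ = ((1 2)⊗id)(R_{31}·R_{24}). -/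
open TensorProduct

section Diagonal
variable (k A : Type*) [CommSemiring k] [Semiring A] [Bialgebra k A]

/-- the coproduct `(2 3) ∘ (Δ^op ⊗ Δ)` of the quasitriangular bialgebra `A^{cop} ⊗ A` -/
noncomputable def copD : A ⊗[k] A →ₗ[k] (A ⊗[k] A) ⊗[k] (A ⊗[k] A) :=
  (TensorProduct.tensorTensorTensorComm k A A A A).toLinearMap ∘ₗ
    TensorProduct.map (copOp k A).toLinearMap (cop k A).toLinearMap

/-- the counit `ε ⊗ ε` of `A^{cop} ⊗ A` -/
noncomputable def couD : A ⊗[k] A →ₐ[k] k :=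
  (Algebra.TensorProduct.lid k k).toAlgHom.comp
    (Algebra.TensorProduct.map (cou k A) (cou k A))

/-- placement of `A ⊗ A` into factors `(3,1)` of `(A ⊗ A) ⊗ (A ⊗ A)` -/
noncomputable def j31 : A ⊗[k] A →ₐ[k] (A ⊗[k] A) ⊗[k] (A ⊗[k] A) :=
  (Algebra.TensorProduct.map Algebra.TensorProduct.includeLeft
    Algebra.TensorProduct.includeLeft).comp (flip2 k A).toAlgHom

/-- placement of `A ⊗ A` into factors `(2,4)` of `(A ⊗ A) ⊗ (A ⊗ A)` -/
noncomputable def j24 : A ⊗[k] A →ₐ[k] (A ⊗[k] A) ⊗[k] (A ⊗[k] A) :=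
  Algebra.TensorProduct.map Algebra.TensorProduct.includeRight
    Algebra.TensorProduct.includeRight

/-- the R-matrix `R₃₁ · R₂₄` of `A^{cop} ⊗ A` -/
noncomputable def rD (R : A ⊗[k] A) : (A ⊗[k] A) ⊗[k] (A ⊗[k] A) :=
  j31 k A R * j24 k A R

/-- `D ⊗ id` on `D ⊗ D` for a linear coproduct `D` on the algebra `A ⊗ A` -/
noncomputable def copDL :
    (A ⊗[k] A) ⊗[k] (A ⊗[k] A) →ₗ[k] (A ⊗[k] A) ⊗[k] ((A ⊗[k] A) ⊗[k] (A ⊗[k] A)) :=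
  (TensorProduct.assoc k (A ⊗[k] A) (A ⊗[k] A) (A ⊗[k] A)).toLinearMap ∘ₗ
    TensorProduct.map (copD k A) LinearMap.id

/-- `id ⊗ D` on `D ⊗ D` -/
noncomputable def copDR :
    (A ⊗[k] A) ⊗[k] (A ⊗[k] A) →ₗ[k] (A ⊗[k] A) ⊗[k] ((A ⊗[k] A) ⊗[k] (A ⊗[k] A)) :=
  TensorProduct.map LinearMap.id (copD k A)

/-- `(ε⊗ε) ⊗ id` on `D ⊗ D` -/
noncomputable def couDL : (A ⊗[k] A) ⊗[k] (A ⊗[k] A) →ₗ[k] A ⊗[k] A :=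
  (TensorProduct.lid k (A ⊗[k] A)).toLinearMap ∘ₗ
    TensorProduct.map (couD k A).toLinearMap LinearMap.id

/-- `id ⊗ (ε⊗ε)` on `D ⊗ D` -/
noncomputable def couDR : (A ⊗[k] A) ⊗[k] (A ⊗[k] A) →ₗ[k] A ⊗[k] A :=
  (TensorProduct.rid k (A ⊗[k] A)).toLinearMap ∘ₗ
    TensorProduct.map LinearMap.id (couD k A).toLinearMap

end Diagonal

/-!
Write elements of tensor powers of `A` in leg notation. Since
`Δ_D (x ⊗ y) = Δ^op(x)₁₃ Δ(y)₂₄`, the coproduct of `D = A^{cop} ⊗ A` is an algebra map, and it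
sends each leg of `D` to a leg of `D ⊗ D` or to a coproduct `(Δ a)ᵢⱼ` placed on two legs. All
claims therefore reduce to identities of legs. Coassociativity and the counit of `D` come from
those of `A` leg by leg. For the universal R-matrix, the two hexagon axioms of `R` give
`(Δ_D ⊗ id)(R₃₁ R₂₄) = R₅₁ R₅₃ · R₂₆ R₄₆`, which becomes `(R_D)₁₃ (R_D)₂₃` once `R₅₃` is moved
past `R₂₆` (their legs are disjoint). In the same way `Δ_D(R) = R₃₄ R₃₂ R₁₄ R₁₂`, and this is
`(1 ⊗ R) · ((1 2) ⊗ id)(R₃₁ R₂₄) · (R ⊗ 1)`. The flip of `D ⊗ D` followed by `(1 2) ⊗ (1 2)`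
swaps the placements `(3,1)` and `(2,4)`, which gives the twist pair. Finally, by
coassociativity `Δ_D(Δ x)` carries a coproduct on legs `1, 2`, so `Δ(A)` is a right coideal.
-/

open Algebra.TensorProduct

section Legs
variable {k A S : Type*} [CommSemiring k] [Semiring S] [Algebra k S]

theorem commute_lift_right {B C : Type*} [Semiring B] [Semiring C] [Algebra k B] [Algebra k C]
    {f : B →ₐ[k] S} {g : C →ₐ[k] S} (hfg : ∀ b c, Commute (f b) (g c)) {s : S}
    (hf : ∀ b, Commute s (f b)) (hg : ∀ c, Commute s (g c)) (x : B ⊗[k] C) :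
    Commute s (lift f g hfg x) := by
  induction x using TensorProduct.induction_on with
  | zero => simp
  | tmul b c => simpa using (hf b).mul_right (hg c)
  | add x y hx hy => simpa using hx.add_right hy

theorem commute_of_commute_tmul {M N P Q : Type*} [AddCommMonoid M] [AddCommMonoid N]
    [AddCommMonoid P] [AddCommMonoid Q] [Module k M] [Module k N] [Module k P] [Module k Q]
    (f : M ⊗[k] N →ₗ[k] S) (g : P ⊗[k] Q →ₗ[k] S)
    (hfg : ∀ m n p q, Commute (f (m ⊗ₜ n)) (g (p ⊗ₜ q))) (x : M ⊗[k] N) (y : P ⊗[k] Q) :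
    Commute (f x) (g y) := by
  induction x using TensorProduct.induction_on with
  | zero => simp
  | tmul m n =>
    induction y using TensorProduct.induction_on with
    | zero => simp
    | tmul p q => exact hfg m n p q
    | add y y' hy hy' => simpa using hy.add_right hy'
  | add x x' hx hx' => simpa using hx.add_left hx'

theorem comp_lift_eq {T B C : Type*} [Semiring T] [Algebra k T] [Semiring B] [Semiring C]
    [Algebra k B] [Algebra k C] {F : S →ₐ[k] T} {f : B →ₐ[k] S} {g : C →ₐ[k] S}
    {f' : B →ₐ[k] T} {g' : C →ₐ[k] T} (hf : F.comp f = f') (hg : F.comp g = g')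
    (hfg : ∀ b c, Commute (f b) (g c)) (hfg' : ∀ b c, Commute (f' b) (g' c)) :
    F.comp (lift f g hfg) = lift f' g' hfg' := by
  subst hf hg
  exact ext' fun b c => by simp

variable [Semiring A] [Bialgebra k A] {f g h : A →ₐ[k] S}
  (hfg : ∀ a b, Commute (f a) (g b)) (hfh : ∀ a c, Commute (f a) (h c))
  (hgh : ∀ b c, Commute (g b) (h c))

theorem copL_cop (a : A) : copL k A (cop k A a) = copR k A (cop k A a) :=
  Coalgebra.coassoc_apply a

variable (f g) in
noncomputable def comulLeg : A →ₐ[k] S :=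
  (lift f g hfg).comp (cop k A)

theorem comulLeg_apply (a : A) : comulLeg f g hfg a = lift f g hfg (cop k A a) := rfl

include hfh hgh in
theorem comulLeg_commute (a c : A) : Commute (comulLeg f g hfg a) (h c) :=
  (commute_lift_right hfg (fun a => (hfh a c).symm) (fun b => (hgh b c).symm) _).symm

include hfg hfh in
theorem commute_comulLeg (a c : A) : Commute (f a) (comulLeg g h hgh c) :=
  commute_lift_right hgh (hfg a) (hfh a) _

theorem comp_comulLeg {T : Type*} [Semiring T] [Algebra k T] {F : S →ₐ[k] T}
    {f' g' : A →ₐ[k] T} (hf : F.comp f = f') (hg : F.comp g = g')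
    (hfg' : ∀ a b, Commute (f' a) (g' b)) :
    F.comp (comulLeg f g hfg) = comulLeg f' g' hfg' := by
  rw [comulLeg, ← AlgHom.comp_assoc, comp_lift_eq hf hg hfg hfg', comulLeg]

variable (f g h) in
noncomputable def lift₃ : A ⊗[k] (A ⊗[k] A) →ₐ[k] S :=
  lift f (lift g h hgh) fun a => commute_lift_right hgh (hfg a) (hfh a)

theorem lift₃_tmul (a b c : A) :
    lift₃ f g h hfg hfh hgh (a ⊗ₜ (b ⊗ₜ c)) = f a * g b * h c := by
  simp [lift₃, mul_assoc]

theorem lift₃_emb13 (x : A ⊗[k] A) :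
    lift₃ f g h hfg hfh hgh (emb13 k A x) = lift f h hfh x := by
  induction x using TensorProduct.induction_on with
  | zero => simp
  | tmul a c => simp [lift₃, emb13]
  | add x y hx hy => simp only [map_add, hx, hy]

theorem lift₃_emb12 (x : A ⊗[k] A) :
    lift₃ f g h hfg hfh hgh (emb12 k A x) = lift f g hfg x := by
  induction x using TensorProduct.induction_on with
  | zero => simp
  | tmul a c => simp [lift₃, emb12]
  | add x y hx hy => simp only [map_add, hx, hy]

theorem lift₃_emb23 (x : A ⊗[k] A) :
    lift₃ f g h hfg hfh hgh (emb23 k A x) = lift g h hgh x := by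
  induction x using TensorProduct.induction_on with
  | zero => simp
  | tmul a c => simp [lift₃, emb23]
  | add x y hx hy => simp only [map_add, hx, hy]

theorem lift_comulLeg_left_apply (x : A ⊗[k] A) :
    lift (comulLeg f g hfg) h (comulLeg_commute hfg hfh hgh) x =
      lift₃ f g h hfg hfh hgh (copL k A x) := by
  induction x using TensorProduct.induction_on with
  | zero => simp
  | tmul x c =>
    simp only [lift_tmul, comulLeg_apply, copL, AlgHom.coe_comp, Function.comp_apply,
      Algebra.TensorProduct.map_tmul, AlgHom.id_apply]
    induction cop k A x using TensorProduct.induction_on with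
    | zero => simp
    | tmul a b => simp [lift₃_tmul]
    | add y z hy hz => simp only [add_tmul, map_add, add_mul, hy, hz]
  | add x y hx hy => simp only [map_add, hx, hy]

theorem lift_comulLeg_right_apply (x : A ⊗[k] A) :
    lift f (comulLeg g h hgh) (commute_comulLeg hfg hfh hgh) x =
      lift₃ f g h hfg hfh hgh (copR k A x) := by
  induction x using TensorProduct.induction_on with
  | zero => simp
  | tmul c x => simp [lift₃, copR, comulLeg_apply]
  | add x y hx hy => simp only [map_add, hx, hy]

theorem comulLeg_assoc :
    comulLeg (comulLeg f g hfg) h (comulLeg_commute hfg hfh hgh) =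
      comulLeg f (comulLeg g h hgh) (commute_comulLeg hfg hfh hgh) := by
  ext a
  rw [comulLeg_apply, comulLeg_apply, lift_comulLeg_left_apply hfg hfh hgh,
    lift_comulLeg_right_apply hfg hfh hgh, copL_cop]

namespace QTriangular
variable {R : A ⊗[k] A} (hR : QTriangular k A R)
include hR

theorem lift_comulLeg_left :
    lift (comulLeg f g hfg) h (comulLeg_commute hfg hfh hgh) R =
      lift f h hfh R * lift g h hgh R := by
  rw [lift_comulLeg_left_apply, hR.coproduct_left, map_mul, lift₃_emb13, lift₃_emb23]

theorem lift_comulLeg_right :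
    lift f (comulLeg g h hgh) (commute_comulLeg hfg hfh hgh) R =
      lift f h hfh R * lift f g hfg R := by
  rw [lift_comulLeg_right_apply, hR.coproduct_right, map_mul, lift₃_emb13, lift₃_emb12]

end QTriangular

variable (k A S) in
noncomputable def counitLeg : A →ₐ[k] S := (Algebra.ofId k S).comp (cou k A)

theorem commute_counitLeg (s : S) (a : A) : Commute s (counitLeg k A S a) :=
  (Algebra.commutes _ s).symm

theorem comulLeg_counitLeg :
    comulLeg f (counitLeg k A S) (fun _ _ => commute_counitLeg _ _) = f := by
  have hlift : ∀ x : A ⊗[k] A, lift f (counitLeg k A S) (fun _ _ => commute_counitLeg _ _) x =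
      f (TensorProduct.rid k A (LinearMap.lTensor A (cou k A).toLinearMap x)) := by
    intro x
    induction x using TensorProduct.induction_on with
    | zero => simp
    | tmul a b => simp [counitLeg, Algebra.commutes, Algebra.smul_def]
    | add x y hx hy => simp only [map_add, hx, hy]
  ext a
  have hcounit : LinearMap.lTensor A (cou k A).toLinearMap (cop k A a) = a ⊗ₜ 1 :=
    Coalgebra.lTensor_counit_comul a
  rw [comulLeg_apply, hlift, hcounit, TensorProduct.rid_tmul, one_smul]

theorem counitLeg_comulLeg :
    comulLeg (counitLeg k A S) f (fun _ _ => (commute_counitLeg _ _).symm) = f := by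
  have hlift : ∀ x : A ⊗[k] A,
      lift (counitLeg k A S) f (fun _ _ => (commute_counitLeg _ _).symm) x =
        f (TensorProduct.lid k A (LinearMap.rTensor A (cou k A).toLinearMap x)) := by
    intro x
    induction x using TensorProduct.induction_on with
    | zero => simp
    | tmul a b => simp [counitLeg, Algebra.smul_def]
    | add x y hx hy => simp only [map_add, hx, hy]
  ext a
  have hcounit : LinearMap.rTensor A (cou k A).toLinearMap (cop k A a) = 1 ⊗ₜ a :=
    Coalgebra.rTensor_counit_comul a
  rw [comulLeg_apply, hlift, hcounit, TensorProduct.lid_tmul, one_smul]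

end Legs

section DiagonalLegs
variable (k A : Type*) [CommSemiring k] [Semiring A] [Algebra k A]

/-! The legs of `D ⊗ D` and of `D ⊗ (D ⊗ D)`, numbered from the left as in `j31` and `j24`;
the factors `A^{cop}` are the odd legs. -/

noncomputable def ι₁ : A →ₐ[k] (A ⊗[k] A) ⊗[k] (A ⊗[k] A) := includeLeft.comp includeLeft
noncomputable def ι₂ : A →ₐ[k] (A ⊗[k] A) ⊗[k] (A ⊗[k] A) := includeLeft.comp includeRight
noncomputable def ι₃ : A →ₐ[k] (A ⊗[k] A) ⊗[k] (A ⊗[k] A) := includeRight.comp includeLeft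
noncomputable def ι₄ : A →ₐ[k] (A ⊗[k] A) ⊗[k] (A ⊗[k] A) := includeRight.comp includeRight

noncomputable def κ₁ : A →ₐ[k] (A ⊗[k] A) ⊗[k] ((A ⊗[k] A) ⊗[k] (A ⊗[k] A)) :=
  includeLeft.comp includeLeft
noncomputable def κ₂ : A →ₐ[k] (A ⊗[k] A) ⊗[k] ((A ⊗[k] A) ⊗[k] (A ⊗[k] A)) :=
  includeLeft.comp includeRight
noncomputable def κ₃ : A →ₐ[k] (A ⊗[k] A) ⊗[k] ((A ⊗[k] A) ⊗[k] (A ⊗[k] A)) :=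
  includeRight.comp (ι₁ k A)
noncomputable def κ₄ : A →ₐ[k] (A ⊗[k] A) ⊗[k] ((A ⊗[k] A) ⊗[k] (A ⊗[k] A)) :=
  includeRight.comp (ι₂ k A)
noncomputable def κ₅ : A →ₐ[k] (A ⊗[k] A) ⊗[k] ((A ⊗[k] A) ⊗[k] (A ⊗[k] A)) :=
  includeRight.comp (ι₃ k A)
noncomputable def κ₆ : A →ₐ[k] (A ⊗[k] A) ⊗[k] ((A ⊗[k] A) ⊗[k] (A ⊗[k] A)) :=
  includeRight.comp (ι₄ k A)

theorem commute_ι₃_ι₁ (a b : A) : Commute (ι₃ k A a) (ι₁ k A b) := by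
  simp [ι₃, ι₁, commute_iff_eq]
theorem commute_ι₃_ι₂ (a b : A) : Commute (ι₃ k A a) (ι₂ k A b) := by
  simp [ι₃, ι₂, commute_iff_eq]
theorem commute_ι₃_ι₄ (a b : A) : Commute (ι₃ k A a) (ι₄ k A b) := by
  simp [ι₃, ι₄, commute_iff_eq]
theorem commute_ι₁_ι₂ (a b : A) : Commute (ι₁ k A a) (ι₂ k A b) := by
  simp [ι₁, ι₂, commute_iff_eq]
theorem commute_ι₁_ι₄ (a b : A) : Commute (ι₁ k A a) (ι₄ k A b) := by
  simp [ι₁, ι₄, commute_iff_eq]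
theorem commute_ι₂_ι₄ (a b : A) : Commute (ι₂ k A a) (ι₄ k A b) := by
  simp [ι₂, ι₄, commute_iff_eq]

theorem commute_κ₅_κ₃ (a b : A) : Commute (κ₅ k A a) (κ₃ k A b) :=
  (commute_ι₃_ι₁ k A a b).map includeRight
theorem commute_κ₅_κ₁ (a b : A) : Commute (κ₅ k A a) (κ₁ k A b) := by
  simp [κ₅, κ₁, ι₃, commute_iff_eq]
theorem commute_κ₃_κ₁ (a b : A) : Commute (κ₃ k A a) (κ₁ k A b) := by
  simp [κ₃, κ₁, ι₁, commute_iff_eq]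
theorem commute_κ₂_κ₄ (a b : A) : Commute (κ₂ k A a) (κ₄ k A b) := by
  simp [κ₂, κ₄, ι₂, commute_iff_eq]
theorem commute_κ₂_κ₆ (a b : A) : Commute (κ₂ k A a) (κ₆ k A b) := by
  simp [κ₂, κ₆, ι₄, commute_iff_eq]
theorem commute_κ₄_κ₆ (a b : A) : Commute (κ₄ k A a) (κ₆ k A b) :=
  (commute_ι₂_ι₄ k A a b).map includeRight

variable {k A}

@[simp] theorem ι₁_apply (a : A) : ι₁ k A a = (a ⊗ₜ 1) ⊗ₜ 1 := rfl
@[simp] theorem ι₂_apply (a : A) : ι₂ k A a = (1 ⊗ₜ a) ⊗ₜ 1 := rfl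
@[simp] theorem ι₃_apply (a : A) : ι₃ k A a = 1 ⊗ₜ (a ⊗ₜ 1) := rfl
@[simp] theorem ι₄_apply (a : A) : ι₄ k A a = 1 ⊗ₜ (1 ⊗ₜ a) := rfl
@[simp] theorem κ₁_apply (a : A) : κ₁ k A a = (a ⊗ₜ 1) ⊗ₜ 1 := rfl
@[simp] theorem κ₂_apply (a : A) : κ₂ k A a = (1 ⊗ₜ a) ⊗ₜ 1 := rfl
@[simp] theorem κ₃_apply (a : A) : κ₃ k A a = 1 ⊗ₜ ((a ⊗ₜ 1) ⊗ₜ 1) := rfl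
@[simp] theorem κ₄_apply (a : A) : κ₄ k A a = 1 ⊗ₜ ((1 ⊗ₜ a) ⊗ₜ 1) := rfl
@[simp] theorem κ₅_apply (a : A) : κ₅ k A a = 1 ⊗ₜ (1 ⊗ₜ (a ⊗ₜ 1)) := rfl
@[simp] theorem κ₆_apply (a : A) : κ₆ k A a = 1 ⊗ₜ (1 ⊗ₜ (1 ⊗ₜ a)) := rfl

theorem commute_lift₃₁_lift₂₄ (u v : A ⊗[k] A) :
    Commute (lift (ι₃ k A) (ι₁ k A) (commute_ι₃_ι₁ k A) u)
      (lift (ι₂ k A) (ι₄ k A) (commute_ι₂_ι₄ k A) v) :=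
  commute_of_commute_tmul (lift (ι₃ k A) (ι₁ k A) (commute_ι₃_ι₁ k A)).toLinearMap
    (lift (ι₂ k A) (ι₄ k A) (commute_ι₂_ι₄ k A)).toLinearMap
    (fun _ _ _ _ => by simp [commute_iff_eq]) _ _

theorem commute_lift₅₃_lift₂₆ (u v : A ⊗[k] A) :
    Commute (lift (κ₅ k A) (κ₃ k A) (commute_κ₅_κ₃ k A) u)
      (lift (κ₂ k A) (κ₆ k A) (commute_κ₂_κ₆ k A) v) :=
  commute_of_commute_tmul (lift (κ₅ k A) (κ₃ k A) (commute_κ₅_κ₃ k A)).toLinearMap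
    (lift (κ₂ k A) (κ₆ k A) (commute_κ₂_κ₆ k A)).toLinearMap
    (fun _ _ _ _ => by simp [commute_iff_eq]) _ _

theorem commute_lift₃₁_lift₂₆ (u v : A ⊗[k] A) :
    Commute (lift (κ₃ k A) (κ₁ k A) (commute_κ₃_κ₁ k A) u)
      (lift (κ₂ k A) (κ₆ k A) (commute_κ₂_κ₆ k A) v) :=
  commute_of_commute_tmul (lift (κ₃ k A) (κ₁ k A) (commute_κ₃_κ₁ k A)).toLinearMap
    (lift (κ₂ k A) (κ₆ k A) (commute_κ₂_κ₆ k A)).toLinearMap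
    (fun _ _ _ _ => by simp [commute_iff_eq]) _ _

end DiagonalLegs

section DiagonalCoproduct
variable (k A : Type*) [CommSemiring k] [Semiring A] [Bialgebra k A]

theorem j31_eq_lift : j31 k A = lift (ι₃ k A) (ι₁ k A) (commute_ι₃_ι₁ k A) :=
  ext' fun a b => by simp [j31, flip2]

theorem j24_eq_lift : j24 k A = lift (ι₂ k A) (ι₄ k A) (commute_ι₂_ι₄ k A) :=
  ext' fun a b => by simp [j24]

theorem commute_comulLeg₃₁_comulLeg₂₄ (x y : A) :
    Commute (comulLeg (ι₃ k A) (ι₁ k A) (commute_ι₃_ι₁ k A) x)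
      (comulLeg (ι₂ k A) (ι₄ k A) (commute_ι₂_ι₄ k A) y) :=
  commute_lift₃₁_lift₂₄ _ _

noncomputable def copDAlgHom : A ⊗[k] A →ₐ[k] (A ⊗[k] A) ⊗[k] (A ⊗[k] A) :=
  lift (comulLeg (ι₃ k A) (ι₁ k A) (commute_ι₃_ι₁ k A))
    (comulLeg (ι₂ k A) (ι₄ k A) (commute_ι₂_ι₄ k A)) (commute_comulLeg₃₁_comulLeg₂₄ k A)

theorem commute_ι₃_comulLeg₂₄ (a c : A) :
    Commute (ι₃ k A a) (comulLeg (ι₂ k A) (ι₄ k A) (commute_ι₂_ι₄ k A) c) :=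
  commute_comulLeg (commute_ι₃_ι₂ k A) (commute_ι₃_ι₄ k A) (commute_ι₂_ι₄ k A) a c

theorem commute_ι₁_comulLeg₂₄ (a c : A) :
    Commute (ι₁ k A a) (comulLeg (ι₂ k A) (ι₄ k A) (commute_ι₂_ι₄ k A) c) :=
  commute_comulLeg (commute_ι₁_ι₂ k A) (commute_ι₁_ι₄ k A) (commute_ι₂_ι₄ k A) a c

variable {k A}

theorem rD_eq (R : A ⊗[k] A) :
    rD k A R = lift (ι₃ k A) (ι₁ k A) (commute_ι₃_ι₁ k A) R *
      lift (ι₂ k A) (ι₄ k A) (commute_ι₂_ι₄ k A) R := by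
  rw [rD, j31_eq_lift, j24_eq_lift]

theorem tensorTensorTensorComm_flip2_tmul (p q : A ⊗[k] A) :
    tensorTensorTensorComm k A A A A (flip2 k A p ⊗ₜ q) =
      lift (ι₃ k A) (ι₁ k A) (commute_ι₃_ι₁ k A) p *
        lift (ι₂ k A) (ι₄ k A) (commute_ι₂_ι₄ k A) q := by
  induction p using TensorProduct.induction_on with
  | zero => simp
  | tmul a b =>
    induction q using TensorProduct.induction_on with
    | zero => simp
    | tmul c d => simp [flip2]
    | add q q' hq hq' => simp only [tmul_add, map_add, mul_add, hq, hq']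
  | add p p' hp hp' => simp only [add_tmul, map_add, add_mul, hp, hp']

theorem copD_apply (u : A ⊗[k] A) : copD k A u = copDAlgHom k A u := by
  induction u using TensorProduct.induction_on with
  | zero => simp
  | tmul x y =>
    simp only [copD, copDAlgHom, LinearMap.comp_apply, TensorProduct.map_tmul]
    exact tensorTensorTensorComm_flip2_tmul _ _
  | add u u' hu hu' => simp only [map_add, hu, hu']

end DiagonalCoproduct

section DiagonalCounit
variable (k A : Type*) [CommSemiring k] [Semiring A] [Bialgebra k A]

noncomputable def couDLAlgHom : (A ⊗[k] A) ⊗[k] (A ⊗[k] A) →ₐ[k] A ⊗[k] A :=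
  (Algebra.TensorProduct.lid k (A ⊗[k] A)).toAlgHom.comp (map (couD k A) (AlgHom.id k _))

noncomputable def couDRAlgHom : (A ⊗[k] A) ⊗[k] (A ⊗[k] A) →ₐ[k] A ⊗[k] A :=
  (Algebra.TensorProduct.rid k k (A ⊗[k] A)).toAlgHom.comp (map (AlgHom.id k _) (couD k A))

variable {k A}

theorem couDL_apply (w : (A ⊗[k] A) ⊗[k] (A ⊗[k] A)) : couDL k A w = couDLAlgHom k A w := by
  induction w using TensorProduct.induction_on with
  | zero => simp
  | tmul p q => simp [couDL, couDLAlgHom]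
  | add w w' hw hw' => simp only [map_add, hw, hw']

theorem couDR_apply (w : (A ⊗[k] A) ⊗[k] (A ⊗[k] A)) : couDR k A w = couDRAlgHom k A w := by
  induction w using TensorProduct.induction_on with
  | zero => simp
  | tmul p q => simp [couDR, couDRAlgHom]
  | add w w' hw hw' => simp only [map_add, hw, hw']

theorem couDLAlgHom_comp_ι₁ : (couDLAlgHom k A).comp (ι₁ k A) = counitLeg k A (A ⊗[k] A) := by
  ext a; simp [couDLAlgHom, couD, counitLeg, Algebra.algebraMap_eq_smul_one]

theorem couDLAlgHom_comp_ι₂ : (couDLAlgHom k A).comp (ι₂ k A) = counitLeg k A (A ⊗[k] A) := by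
  ext a; simp [couDLAlgHom, couD, counitLeg, Algebra.algebraMap_eq_smul_one]

theorem couDLAlgHom_comp_ι₃ : (couDLAlgHom k A).comp (ι₃ k A) = includeLeft := by
  ext a; simp [couDLAlgHom, couD]

theorem couDLAlgHom_comp_ι₄ : (couDLAlgHom k A).comp (ι₄ k A) = includeRight := by
  ext a; simp [couDLAlgHom, couD]

theorem couDRAlgHom_comp_ι₁ : (couDRAlgHom k A).comp (ι₁ k A) = includeLeft := by
  ext a; simp [couDRAlgHom, couD]

theorem couDRAlgHom_comp_ι₂ : (couDRAlgHom k A).comp (ι₂ k A) = includeRight := by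
  ext a; simp [couDRAlgHom, couD]

theorem couDRAlgHom_comp_ι₃ : (couDRAlgHom k A).comp (ι₃ k A) = counitLeg k A (A ⊗[k] A) := by
  ext a; simp [couDRAlgHom, couD, counitLeg, Algebra.algebraMap_eq_smul_one]

theorem couDRAlgHom_comp_ι₄ : (couDRAlgHom k A).comp (ι₄ k A) = counitLeg k A (A ⊗[k] A) := by
  ext a; simp [couDRAlgHom, couD, counitLeg, Algebra.algebraMap_eq_smul_one]

theorem couDLAlgHom_comp_comulLeg₃₁ :
    (couDLAlgHom k A).comp (comulLeg (ι₃ k A) (ι₁ k A) (commute_ι₃_ι₁ k A)) = includeLeft := by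
  rw [comp_comulLeg (commute_ι₃_ι₁ k A) couDLAlgHom_comp_ι₃ couDLAlgHom_comp_ι₁
    (fun _ _ => commute_counitLeg _ _), comulLeg_counitLeg]

theorem couDLAlgHom_comp_comulLeg₂₄ :
    (couDLAlgHom k A).comp (comulLeg (ι₂ k A) (ι₄ k A) (commute_ι₂_ι₄ k A)) = includeRight := by
  rw [comp_comulLeg (commute_ι₂_ι₄ k A) couDLAlgHom_comp_ι₂ couDLAlgHom_comp_ι₄
    (fun _ _ => (commute_counitLeg _ _).symm), counitLeg_comulLeg]

theorem couDRAlgHom_comp_comulLeg₃₁ :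
    (couDRAlgHom k A).comp (comulLeg (ι₃ k A) (ι₁ k A) (commute_ι₃_ι₁ k A)) = includeLeft := by
  rw [comp_comulLeg (commute_ι₃_ι₁ k A) couDRAlgHom_comp_ι₃ couDRAlgHom_comp_ι₁
    (fun _ _ => (commute_counitLeg _ _).symm), counitLeg_comulLeg]

theorem couDRAlgHom_comp_comulLeg₂₄ :
    (couDRAlgHom k A).comp (comulLeg (ι₂ k A) (ι₄ k A) (commute_ι₂_ι₄ k A)) = includeRight := by
  rw [comp_comulLeg (commute_ι₂_ι₄ k A) couDRAlgHom_comp_ι₂ couDRAlgHom_comp_ι₄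
    (fun _ _ => commute_counitLeg _ _), comulLeg_counitLeg]

theorem couDL_copD (u : A ⊗[k] A) : couDL k A (copD k A u) = u := by
  rw [couDL_apply, copD_apply, ← AlgHom.comp_apply]
  refine DFunLike.congr_fun (Algebra.TensorProduct.ext' (h := AlgHom.id k _) fun x y => ?_) u
  rw [AlgHom.comp_apply, copDAlgHom, lift_tmul, map_mul, ← AlgHom.comp_apply,
    couDLAlgHom_comp_comulLeg₃₁, ← AlgHom.comp_apply, couDLAlgHom_comp_comulLeg₂₄]
  simp

theorem couDR_copD (u : A ⊗[k] A) : couDR k A (copD k A u) = u := by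
  rw [couDR_apply, copD_apply, ← AlgHom.comp_apply]
  refine DFunLike.congr_fun (Algebra.TensorProduct.ext' (h := AlgHom.id k _) fun x y => ?_) u
  rw [AlgHom.comp_apply, copDAlgHom, lift_tmul, map_mul, ← AlgHom.comp_apply,
    couDRAlgHom_comp_comulLeg₃₁, ← AlgHom.comp_apply, couDRAlgHom_comp_comulLeg₂₄]
  simp

end DiagonalCounit

section DiagonalCoassoc
variable (k A : Type*) [CommSemiring k] [Semiring A] [Bialgebra k A]

noncomputable def copDLAlgHom :
    (A ⊗[k] A) ⊗[k] (A ⊗[k] A) →ₐ[k] (A ⊗[k] A) ⊗[k] ((A ⊗[k] A) ⊗[k] (A ⊗[k] A)) :=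
  (Algebra.TensorProduct.assoc k k k _ _ _).toAlgHom.comp (map (copDAlgHom k A) (AlgHom.id k _))

noncomputable def copDRAlgHom :
    (A ⊗[k] A) ⊗[k] (A ⊗[k] A) →ₐ[k] (A ⊗[k] A) ⊗[k] ((A ⊗[k] A) ⊗[k] (A ⊗[k] A)) :=
  map (AlgHom.id k _) (copDAlgHom k A)

variable {k A}

theorem copDL_apply (w : (A ⊗[k] A) ⊗[k] (A ⊗[k] A)) : copDL k A w = copDLAlgHom k A w := by
  induction w using TensorProduct.induction_on with
  | zero => simp
  | tmul p q => simp [copDL, copDLAlgHom, copD_apply]; rfl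
  | add w w' hw hw' => simp only [map_add, hw, hw']

theorem copDR_apply (w : (A ⊗[k] A) ⊗[k] (A ⊗[k] A)) : copDR k A w = copDRAlgHom k A w := by
  induction w using TensorProduct.induction_on with
  | zero => simp
  | tmul p q => simp [copDR, copDRAlgHom, copD_apply]
  | add w w' hw hw' => simp only [map_add, hw, hw']

theorem copDLAlgHom_comp_ι₁ :
    (copDLAlgHom k A).comp (ι₁ k A) = comulLeg (κ₃ k A) (κ₁ k A) (commute_κ₃_κ₁ k A) := by
  have h : ((Algebra.TensorProduct.assoc k k k _ _ _).toAlgHom.comp includeLeft).comp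
      (lift (ι₃ k A) (ι₁ k A) (commute_ι₃_ι₁ k A)) = lift (κ₃ k A) (κ₁ k A) (commute_κ₃_κ₁ k A) :=
    ext' fun a b => by simp
  ext b
  simpa [copDLAlgHom, copDAlgHom, comulLeg_apply] using DFunLike.congr_fun h (cop k A b)

theorem copDLAlgHom_comp_ι₂ :
    (copDLAlgHom k A).comp (ι₂ k A) = comulLeg (κ₂ k A) (κ₄ k A) (commute_κ₂_κ₄ k A) := by
  have h : ((Algebra.TensorProduct.assoc k k k _ _ _).toAlgHom.comp includeLeft).comp
      (lift (ι₂ k A) (ι₄ k A) (commute_ι₂_ι₄ k A)) = lift (κ₂ k A) (κ₄ k A) (commute_κ₂_κ₄ k A) :=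
    ext' fun a b => by simp
  ext b
  simpa [copDLAlgHom, copDAlgHom, comulLeg_apply] using DFunLike.congr_fun h (cop k A b)

theorem copDLAlgHom_comp_ι₃ : (copDLAlgHom k A).comp (ι₃ k A) = κ₅ k A := by
  ext a; simp [copDLAlgHom]; rfl

theorem copDLAlgHom_comp_ι₄ : (copDLAlgHom k A).comp (ι₄ k A) = κ₆ k A := by
  ext a; simp [copDLAlgHom]; rfl

theorem copDRAlgHom_comp_ι₁ : (copDRAlgHom k A).comp (ι₁ k A) = κ₁ k A := by
  ext a; simp [copDRAlgHom]

theorem copDRAlgHom_comp_ι₂ : (copDRAlgHom k A).comp (ι₂ k A) = κ₂ k A := by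
  ext a; simp [copDRAlgHom]

theorem copDRAlgHom_comp_ι₃ :
    (copDRAlgHom k A).comp (ι₃ k A) = comulLeg (κ₅ k A) (κ₃ k A) (commute_κ₅_κ₃ k A) := by
  have h : includeRight.comp (lift (ι₃ k A) (ι₁ k A) (commute_ι₃_ι₁ k A)) =
      lift (κ₅ k A) (κ₃ k A) (commute_κ₅_κ₃ k A) :=
    ext' fun a b => by simp
  ext b
  simpa [copDRAlgHom, copDAlgHom, comulLeg_apply] using DFunLike.congr_fun h (cop k A b)

theorem copDRAlgHom_comp_ι₄ :
    (copDRAlgHom k A).comp (ι₄ k A) = comulLeg (κ₄ k A) (κ₆ k A) (commute_κ₄_κ₆ k A) := by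
  have h : includeRight.comp (lift (ι₂ k A) (ι₄ k A) (commute_ι₂_ι₄ k A)) =
      lift (κ₄ k A) (κ₆ k A) (commute_κ₄_κ₆ k A) :=
    ext' fun a b => by simp
  ext b
  simpa [copDRAlgHom, copDAlgHom, comulLeg_apply] using DFunLike.congr_fun h (cop k A b)

theorem copDLAlgHom_lift₃₁ (u : A ⊗[k] A) :
    copDLAlgHom k A (lift (ι₃ k A) (ι₁ k A) (commute_ι₃_ι₁ k A) u) =
      lift (κ₅ k A) (comulLeg (κ₃ k A) (κ₁ k A) (commute_κ₃_κ₁ k A))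
        (commute_comulLeg (commute_κ₅_κ₃ k A) (commute_κ₅_κ₁ k A) (commute_κ₃_κ₁ k A)) u :=
  DFunLike.congr_fun (comp_lift_eq copDLAlgHom_comp_ι₃ copDLAlgHom_comp_ι₁ (commute_ι₃_ι₁ k A) _) u

theorem copDLAlgHom_lift₂₄ (u : A ⊗[k] A) :
    copDLAlgHom k A (lift (ι₂ k A) (ι₄ k A) (commute_ι₂_ι₄ k A) u) =
      lift (comulLeg (κ₂ k A) (κ₄ k A) (commute_κ₂_κ₄ k A)) (κ₆ k A)
        (comulLeg_commute (commute_κ₂_κ₄ k A) (commute_κ₂_κ₆ k A) (commute_κ₄_κ₆ k A)) u :=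
  DFunLike.congr_fun (comp_lift_eq copDLAlgHom_comp_ι₂ copDLAlgHom_comp_ι₄ (commute_ι₂_ι₄ k A) _) u

theorem copDRAlgHom_lift₃₁ (u : A ⊗[k] A) :
    copDRAlgHom k A (lift (ι₃ k A) (ι₁ k A) (commute_ι₃_ι₁ k A) u) =
      lift (comulLeg (κ₅ k A) (κ₃ k A) (commute_κ₅_κ₃ k A)) (κ₁ k A)
        (comulLeg_commute (commute_κ₅_κ₃ k A) (commute_κ₅_κ₁ k A) (commute_κ₃_κ₁ k A)) u :=
  DFunLike.congr_fun (comp_lift_eq copDRAlgHom_comp_ι₃ copDRAlgHom_comp_ι₁ (commute_ι₃_ι₁ k A) _) u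

theorem copDRAlgHom_lift₂₄ (u : A ⊗[k] A) :
    copDRAlgHom k A (lift (ι₂ k A) (ι₄ k A) (commute_ι₂_ι₄ k A) u) =
      lift (κ₂ k A) (comulLeg (κ₄ k A) (κ₆ k A) (commute_κ₄_κ₆ k A))
        (commute_comulLeg (commute_κ₂_κ₄ k A) (commute_κ₂_κ₆ k A) (commute_κ₄_κ₆ k A)) u :=
  DFunLike.congr_fun (comp_lift_eq copDRAlgHom_comp_ι₂ copDRAlgHom_comp_ι₄ (commute_ι₂_ι₄ k A) _) u

theorem copDL_copD (u : A ⊗[k] A) : copDL k A (copD k A u) = copDR k A (copD k A u) := by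
  rw [copD_apply, copDL_apply, copDR_apply, ← AlgHom.comp_apply, ← AlgHom.comp_apply]
  congr 1
  refine ext' fun x y => ?_
  simp only [AlgHom.comp_apply, copDAlgHom, lift_tmul, map_mul, comulLeg_apply, copDLAlgHom_lift₃₁,
    copDLAlgHom_lift₂₄, copDRAlgHom_lift₃₁, copDRAlgHom_lift₂₄]
  exact congr_arg₂ (· * ·)
    (DFunLike.congr_fun (comulLeg_assoc (commute_κ₅_κ₃ k A) (commute_κ₅_κ₁ k A)
      (commute_κ₃_κ₁ k A)).symm x)
    (DFunLike.congr_fun (comulLeg_assoc (commute_κ₂_κ₄ k A) (commute_κ₂_κ₆ k A)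
      (commute_κ₄_κ₆ k A)) y)

end DiagonalCoassoc

section DiagonalRMatrix
variable {k A : Type*} [CommSemiring k] [Semiring A] [Bialgebra k A]

theorem emb13_lift₃₁ (u : A ⊗[k] A) :
    emb13 k (A ⊗[k] A) (lift (ι₃ k A) (ι₁ k A) (commute_ι₃_ι₁ k A) u) =
      lift (κ₅ k A) (κ₁ k A) (commute_κ₅_κ₁ k A) u := by
  rw [← AlgHom.comp_apply]
  exact DFunLike.congr_fun (Algebra.TensorProduct.ext' fun a b => by simp [emb13]) u

theorem emb13_lift₂₄ (u : A ⊗[k] A) :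
    emb13 k (A ⊗[k] A) (lift (ι₂ k A) (ι₄ k A) (commute_ι₂_ι₄ k A) u) =
      lift (κ₂ k A) (κ₆ k A) (commute_κ₂_κ₆ k A) u := by
  rw [← AlgHom.comp_apply]
  exact DFunLike.congr_fun (Algebra.TensorProduct.ext' fun a b => by simp [emb13]) u

theorem emb23_lift₃₁ (u : A ⊗[k] A) :
    emb23 k (A ⊗[k] A) (lift (ι₃ k A) (ι₁ k A) (commute_ι₃_ι₁ k A) u) =
      lift (κ₅ k A) (κ₃ k A) (commute_κ₅_κ₃ k A) u := by
  rw [← AlgHom.comp_apply]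
  exact DFunLike.congr_fun (Algebra.TensorProduct.ext' fun a b => by simp [emb23]) u

theorem emb23_lift₂₄ (u : A ⊗[k] A) :
    emb23 k (A ⊗[k] A) (lift (ι₂ k A) (ι₄ k A) (commute_ι₂_ι₄ k A) u) =
      lift (κ₄ k A) (κ₆ k A) (commute_κ₄_κ₆ k A) u := by
  rw [← AlgHom.comp_apply]
  exact DFunLike.congr_fun (Algebra.TensorProduct.ext' fun a b => by simp [emb23]) u

theorem emb12_lift₃₁ (u : A ⊗[k] A) :
    emb12 k (A ⊗[k] A) (lift (ι₃ k A) (ι₁ k A) (commute_ι₃_ι₁ k A) u) =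
      lift (κ₃ k A) (κ₁ k A) (commute_κ₃_κ₁ k A) u := by
  rw [← AlgHom.comp_apply]
  exact DFunLike.congr_fun (Algebra.TensorProduct.ext' fun a b => by simp [emb12]) u

theorem emb12_lift₂₄ (u : A ⊗[k] A) :
    emb12 k (A ⊗[k] A) (lift (ι₂ k A) (ι₄ k A) (commute_ι₂_ι₄ k A) u) =
      lift (κ₂ k A) (κ₄ k A) (commute_κ₂_κ₄ k A) u := by
  rw [← AlgHom.comp_apply]
  exact DFunLike.congr_fun (Algebra.TensorProduct.ext' fun a b => by simp [emb12]) u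

variable {R : A ⊗[k] A} (hR : QTriangular k A R)
include hR

theorem copDL_rD : copDL k A (rD k A R) =
    emb13 k (A ⊗[k] A) (rD k A R) * emb23 k (A ⊗[k] A) (rD k A R) := by
  rw [copDL_apply, rD_eq, map_mul, map_mul, map_mul, copDLAlgHom_lift₃₁, copDLAlgHom_lift₂₄,
    hR.lift_comulLeg_right (commute_κ₅_κ₃ k A) (commute_κ₅_κ₁ k A) (commute_κ₃_κ₁ k A),
    hR.lift_comulLeg_left (commute_κ₂_κ₄ k A) (commute_κ₂_κ₆ k A) (commute_κ₄_κ₆ k A),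
    emb13_lift₃₁, emb13_lift₂₄, emb23_lift₃₁, emb23_lift₂₄]
  exact (commute_lift₅₃_lift₂₆ R R).mul_mul_mul_comm _ _

theorem copDR_rD : copDR k A (rD k A R) =
    emb13 k (A ⊗[k] A) (rD k A R) * emb12 k (A ⊗[k] A) (rD k A R) := by
  rw [copDR_apply, rD_eq, map_mul, map_mul, map_mul, copDRAlgHom_lift₃₁, copDRAlgHom_lift₂₄,
    hR.lift_comulLeg_left (commute_κ₅_κ₃ k A) (commute_κ₅_κ₁ k A) (commute_κ₃_κ₁ k A),
    hR.lift_comulLeg_right (commute_κ₂_κ₄ k A) (commute_κ₂_κ₆ k A) (commute_κ₄_κ₆ k A),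
    emb13_lift₃₁, emb13_lift₂₄, emb12_lift₃₁, emb12_lift₂₄]
  exact (commute_lift₃₁_lift₂₆ R R).mul_mul_mul_comm _ _

end DiagonalRMatrix

section DiagonalTwist
variable {k A : Type*} [CommSemiring k] [Semiring A] [Bialgebra k A]

theorem flip2_lift₃₁ (u : A ⊗[k] A) :
    flip2 k (A ⊗[k] A) (lift (ι₃ k A) (ι₁ k A) (commute_ι₃_ι₁ k A) u) =
      lift (ι₃ k A) (ι₁ k A) (commute_ι₃_ι₁ k A) (flip2 k A u) := by
  induction u using TensorProduct.induction_on with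
  | zero => simp
  | tmul a b => simp [flip2]
  | add u v hu hv => simp only [map_add, hu, hv]

theorem flip2_lift₂₄ (u : A ⊗[k] A) :
    flip2 k (A ⊗[k] A) (lift (ι₂ k A) (ι₄ k A) (commute_ι₂_ι₄ k A) u) =
      lift (ι₂ k A) (ι₄ k A) (commute_ι₂_ι₄ k A) (flip2 k A u) := by
  induction u using TensorProduct.induction_on with
  | zero => simp
  | tmul a b => simp [flip2]
  | add u v hu hv => simp only [map_add, hu, hv]

theorem psiBoth_flip2_lift₃₁ (u : A ⊗[k] A) :
    psiBoth k (A ⊗[k] A) (flip2 k A)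
        (flip2 k (A ⊗[k] A) (lift (ι₃ k A) (ι₁ k A) (commute_ι₃_ι₁ k A) u)) =
      lift (ι₂ k A) (ι₄ k A) (commute_ι₂_ι₄ k A) u := by
  induction u using TensorProduct.induction_on with
  | zero => simp
  | tmul a b => simp [psiBoth, flip2]
  | add u v hu hv => simp only [map_add, hu, hv]

theorem psiBoth_flip2_lift₂₄ (u : A ⊗[k] A) :
    psiBoth k (A ⊗[k] A) (flip2 k A)
        (flip2 k (A ⊗[k] A) (lift (ι₂ k A) (ι₄ k A) (commute_ι₂_ι₄ k A) u)) =
      lift (ι₃ k A) (ι₁ k A) (commute_ι₃_ι₁ k A) u := by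
  induction u using TensorProduct.induction_on with
  | zero => simp
  | tmul a b => simp [psiBoth, flip2]
  | add u v hu hv => simp only [map_add, hu, hv]

theorem psiBoth_flip2_copD (u : A ⊗[k] A) :
    psiBoth k (A ⊗[k] A) (flip2 k A) (flip2 k (A ⊗[k] A) (copD k A u)) =
      copD k A (flip2 k A u) := by
  induction u using TensorProduct.induction_on with
  | zero => simp
  | tmul x y =>
    rw [copD_apply, copD_apply, show flip2 k A (x ⊗ₜ y) = y ⊗ₜ x from rfl, copDAlgHom, lift_tmul,
      lift_tmul, map_mul, map_mul, comulLeg_apply, comulLeg_apply, comulLeg_apply, comulLeg_apply,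
      psiBoth_flip2_lift₃₁, psiBoth_flip2_lift₂₄]
    exact (commute_lift₃₁_lift₂₄ _ _).symm.eq
  | add u v hu hv => simp only [map_add, hu, hv]

theorem psiBoth_flip2_rD (R : A ⊗[k] A) :
    psiBoth k (A ⊗[k] A) (flip2 k A) (flip2 k (A ⊗[k] A) (rD k A R)) = rD k A R := by
  rw [rD_eq, map_mul, map_mul, psiBoth_flip2_lift₃₁, psiBoth_flip2_lift₂₄]
  exact (commute_lift₃₁_lift₂₄ R R).symm.eq

theorem one_tmul_eq_lift₃₄ (u : A ⊗[k] A) :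
    (1 : A ⊗[k] A) ⊗ₜ u = lift (ι₃ k A) (ι₄ k A) (commute_ι₃_ι₄ k A) u := by
  induction u using TensorProduct.induction_on with
  | zero => simp
  | tmul a b => simp [Algebra.TensorProduct.one_def]
  | add u v hu hv => simp only [map_add, tmul_add, hu, hv]

theorem tmul_one_eq_lift₁₂ (u : A ⊗[k] A) :
    u ⊗ₜ (1 : A ⊗[k] A) = lift (ι₁ k A) (ι₂ k A) (commute_ι₁_ι₂ k A) u := by
  induction u using TensorProduct.induction_on with
  | zero => simp
  | tmul a b => simp [Algebra.TensorProduct.one_def]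
  | add u v hu hv => simp only [map_add, add_tmul, hu, hv]

theorem psiL_lift₃₁ (u : A ⊗[k] A) :
    psiL k (A ⊗[k] A) (flip2 k A) (lift (ι₃ k A) (ι₁ k A) (commute_ι₃_ι₁ k A) u) =
      lift (ι₃ k A) (ι₂ k A) (commute_ι₃_ι₂ k A) u := by
  induction u using TensorProduct.induction_on with
  | zero => simp
  | tmul a b => simp [psiL, flip2]
  | add u v hu hv => simp only [map_add, hu, hv]

theorem psiL_lift₂₄ (u : A ⊗[k] A) :
    psiL k (A ⊗[k] A) (flip2 k A) (lift (ι₂ k A) (ι₄ k A) (commute_ι₂_ι₄ k A) u) =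
      lift (ι₁ k A) (ι₄ k A) (commute_ι₁_ι₄ k A) u := by
  induction u using TensorProduct.induction_on with
  | zero => simp
  | tmul a b => simp [psiL, flip2]
  | add u v hu hv => simp only [map_add, hu, hv]

end DiagonalTwist

section DiagonalQuasitriangular
variable {k A : Type*} [CommSemiring k] [Semiring A] [Bialgebra k A]
  {R : A ⊗[k] A} (hR : QTriangular k A R)
include hR

theorem rD_mul_copD (u : A ⊗[k] A) :
    rD k A R * copD k A u = flip2 k (A ⊗[k] A) (copD k A u) * rD k A R := by
  induction u using TensorProduct.induction_on with
  | zero => simp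
  | tmul x y =>
    set L₃₁ := lift (ι₃ k A) (ι₁ k A) (commute_ι₃_ι₁ k A)
    set L₂₄ := lift (ι₂ k A) (ι₄ k A) (commute_ι₂_ι₄ k A)
    have hΦ : ∀ a b : A, copD k A (a ⊗ₜ b) = L₃₁ (cop k A a) * L₂₄ (cop k A b) := fun _ _ => by
      rw [copD_apply, copDAlgHom, lift_tmul, comulLeg_apply, comulLeg_apply]
    calc rD k A R * copD k A (x ⊗ₜ y)
        = L₃₁ R * L₃₁ (cop k A x) * (L₂₄ R * L₂₄ (cop k A y)) := by
          rw [rD_eq, hΦ, (commute_lift₃₁_lift₂₄ _ _).symm.mul_mul_mul_comm]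
      _ = L₃₁ (copOp k A x) * L₃₁ R * (L₂₄ (copOp k A y) * L₂₄ R) := by
          rw [← map_mul, ← map_mul, hR.intertwine, hR.intertwine, map_mul, map_mul]
      _ = flip2 k (A ⊗[k] A) (copD k A (x ⊗ₜ y)) * rD k A R := by
          rw [rD_eq, hΦ, map_mul, flip2_lift₃₁, flip2_lift₂₄,
            (commute_lift₃₁_lift₂₄ _ _).mul_mul_mul_comm]
          rfl
  | add u v hu hv => simp only [map_add, mul_add, add_mul, hu, hv]

theorem copD_R : copD k A R =
    ((1 : A ⊗[k] A) ⊗ₜ[k] R) * psiL k (A ⊗[k] A) (flip2 k A) (rD k A R) *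
      (R ⊗ₜ[k] (1 : A ⊗[k] A)) := by
  rw [copD_apply, copDAlgHom, hR.lift_comulLeg_left (commute_ι₃_ι₁ k A)
      (commute_ι₃_comulLeg₂₄ k A) (commute_ι₁_comulLeg₂₄ k A),
    hR.lift_comulLeg_right (commute_ι₃_ι₂ k A) (commute_ι₃_ι₄ k A) (commute_ι₂_ι₄ k A),
    hR.lift_comulLeg_right (commute_ι₁_ι₂ k A) (commute_ι₁_ι₄ k A) (commute_ι₂_ι₄ k A),
    rD_eq, map_mul, psiL_lift₃₁, psiL_lift₂₄, one_tmul_eq_lift₃₄, tmul_one_eq_lift₁₂]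
  simp only [mul_assoc]

end DiagonalQuasitriangular

section DiagonalCoideal
variable {k A : Type*} [CommSemiring k] [Semiring A] [Bialgebra k A]

theorem copD_cop_mem (x : A) : copD k A (cop k A x) ∈ sub2 k (A ⊗[k] A) (cop k A).range := by
  have hΦ := DFunLike.congr_fun (comulLeg_assoc (commute_ι₃_ι₁ k A) (commute_ι₃_comulLeg₂₄ k A)
    (commute_ι₁_comulLeg₂₄ k A)) x
  have hinner := comulLeg_assoc (commute_ι₁_ι₂ k A) (commute_ι₁_ι₄ k A) (commute_ι₂_ι₄ k A)
  have hbase : ∀ a c d : A,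
      ι₃ k A a * (lift (ι₁ k A) (ι₂ k A) (commute_ι₁_ι₂ k A) (cop k A c) * ι₄ k A d) ∈
        sub2 k (A ⊗[k] A) (cop k A).range := by
    intro a c d
    rw [← tmul_one_eq_lift₁₂]
    exact Submodule.subset_span ⟨cop k A c, ⟨c, rfl⟩, a ⊗ₜ d, by simp⟩
  rw [copD_apply, show copDAlgHom k A (cop k A x) = _ from hΦ, comulLeg_apply]
  induction cop k A x using TensorProduct.induction_on with
  | zero => simp
  | tmul a b =>
    rw [lift_tmul, ← hinner, comulLeg_apply]
    induction cop k A b using TensorProduct.induction_on with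
    | zero => simp
    | tmul c d => rw [lift_tmul, comulLeg_apply]; exact hbase a c d
    | add p q hp hq => rw [map_add, mul_add]; exact Submodule.add_mem _ hp hq
  | add p q hp hq => rw [map_add]; exact Submodule.add_mem _ hp hq

end DiagonalCoideal

/-- For a quasitriangular bialgebra `A`, the algebra
`D = A^{cop} ⊗ A` with coproduct `Δ_D = (2 3) ∘ (Δ^op ⊗ Δ)`, counit `ε ⊗ ε` and
R-matrix `R_D = R₃₁ · R₂₄` is a quasitriangular bialgebra, `Δ(A) ⊆ D` is a right
coideal subalgebra, and `(ψ, J, K) = ((1 2), 1 ⊗ 1, R)` is a cylindrical structure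
on `(D, Δ(A))` (the *diagonal* cylindrical structure). -/
theorem diagonal_cylindrical_structure
    {k A : Type*} [Field k] [Ring A] [Bialgebra k A]
    (R : A ⊗[k] A) (hR : QTriangular k A R) :
    -- D = A^{cop} ⊗ A is a bialgebra
    (copD k A 1 = 1) ∧
    (∀ u v : A ⊗[k] A, copD k A (u * v) = copD k A u * copD k A v) ∧
    (∀ u : A ⊗[k] A, copDL k A (copD k A u) = copDR k A (copD k A u)) ∧
    (∀ u : A ⊗[k] A, couDL k A (copD k A u) = u) ∧
    (∀ u : A ⊗[k] A, couDR k A (copD k A u) = u) ∧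
    -- R_D = R₃₁·R₂₄ is an invertible universal R-matrix for D
    (IsUnit (rD k A R)) ∧
    (∀ u : A ⊗[k] A, rD k A R * copD k A u =
      flip2 k (A ⊗[k] A) (copD k A u) * rD k A R) ∧
    (copDL k A (rD k A R) =
      emb13 k (A ⊗[k] A) (rD k A R) * emb23 k (A ⊗[k] A) (rD k A R)) ∧
    (copDR k A (rD k A R) =
      emb13 k (A ⊗[k] A) (rD k A R) * emb12 k (A ⊗[k] A) (rD k A R)) ∧
    -- Δ(A) is a right coideal subalgebra of D
    (∀ x : A, copD k A (cop k A x) ∈ sub2 k (A ⊗[k] A) (cop k A).range) ∧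
    -- ((1 2), 1 ⊗ 1, R) is a cylindrical structure on (D, Δ(A)):
    -- (i) ((1 2), 1 ⊗ 1) is a twist pair: D^{cop, (1 2)} = D as quasitriangular bialgebras
    (∀ u : A ⊗[k] A,
      psiBoth k (A ⊗[k] A) (flip2 k A)
        (flip2 k (A ⊗[k] A) (copD k A ((flip2 k A).symm u))) = copD k A u) ∧
    (psiBoth k (A ⊗[k] A) (flip2 k A) (flip2 k (A ⊗[k] A) (rD k A R)) = rD k A R) ∧
    -- (ii) the intertwining identity `R · Δ(x) = (1 2)(Δ(x)) · R` for `x ∈ A`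
    (∀ x : A, R * cop k A x = flip2 k A (cop k A x) * R) ∧
    -- (iii) the coproduct identity `Δ_D(R) = (1 ⊗ R) · R_D^ψ · (R ⊗ 1)`
    (copD k A R =
      ((1 : A ⊗[k] A) ⊗ₜ[k] R) * psiL k (A ⊗[k] A) (flip2 k A) (rD k A R) *
        (R ⊗ₜ[k] (1 : A ⊗[k] A))) := by
  refine ⟨by rw [copD_apply, map_one], fun u v => by simp only [copD_apply, map_mul], copDL_copD,
    couDL_copD, couDR_copD, (hR.isUnit.map _).mul (hR.isUnit.map _), rD_mul_copD hR, copDL_rD hR,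
    copDR_rD hR, copD_cop_mem, fun u => ?_, psiBoth_flip2_rD R, hR.intertwine, copD_R hR⟩
  rw [psiBoth_flip2_copD, AlgEquiv.apply_symm_apply]
end

section
/- Let Q⁺ be the free commutative monoid on a finite set of generators (simple roots), let A = ⊕_{β ∈ Q⁺} A_β be a Q⁺-graded associative algebra over a field of characteristic 0 with A_0 = k, and let Y = (Y_β)_{β ∈ Q⁺, β ≠ 0} be a family with Y_β ∈ A_β. Let T ⊆ Q⁺ ∖ {0} be a subset with the property: for every λ ∉ T ∪ {0} and every decomposition λ = β₁ + ⋯ + β_k into nonzero elements of Q⁺ with k ≥ 1, at least one β_j lies outside T. Suppose that for every λ ∉ T ∪ {0} we have Σ_{k ≥ 1} (1/k!) Σ_{β₁+⋯+β_k = λ, β_j ≠ 0} Y_{β₁}⋯Y_{β_k} = 0 (a finite sum in A_λ). Then Y_λ = 0 for all λ ∉ T ∪ {0}. -/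
/-!
By well-founded induction on `λ` for the componentwise order on `ι →₀ ℕ`:
in the sum for `λ ∉ T ∪ {0}`, every decomposition other than `[λ]` has at least two
nonzero parts, one of which lies outside `T` and is strictly smaller than `λ`, so its `Y`
vanishes by induction and kills the product. Only the term `Y_λ` survives, hence `Y_λ = 0`.
-/

open scoped Nat

section OrderedDecompositions

variable {M : Type*} [AddCommMonoid M]

def orderedDecompositions (lam : M) : Set (List M) :=
  {l | l ≠ [] ∧ (∀ β ∈ l, β ≠ 0) ∧ l.sum = lam}

theorem singleton_mem_orderedDecompositions {lam : M} (hlam : lam ≠ 0) :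
    [lam] ∈ orderedDecompositions lam :=
  ⟨List.cons_ne_nil _ _, by simpa using hlam, List.sum_singleton⟩

theorem lt_of_mem_orderedDecompositions [PartialOrder M] [IsOrderedCancelAddMonoid M]
    [CanonicallyOrderedAdd M] {lam β : M} {l : List M} (hl : l ∈ orderedDecompositions lam)
    (hne : l ≠ [lam]) (hβ : β ∈ l) : β < lam := by
  classical
  obtain ⟨-, hl0, rfl⟩ := hl
  have hperm : l.Perm (β :: l.erase β) := List.perm_cons_erase hβ
  have hrest : l.erase β ≠ [] := by
    intro h
    rw [h] at hperm
    exact hne (by rw [hperm.eq_singleton, List.sum_singleton])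
  have hrest_pos : 0 < (l.erase β).sum := by
    refine pos_iff_ne_zero.mpr fun h0 => ?_
    obtain ⟨γ, hγ⟩ := List.exists_mem_of_ne_nil _ hrest
    exact hl0 γ (List.mem_of_mem_erase hγ) (List.sum_eq_zero_iff.mp h0 γ hγ)
  rw [hperm.sum_eq, List.sum_cons]
  exact lt_add_of_pos_right β hrest_pos

/-- The left-hand side is the degree-`λ` component of `exp(Y)`. -/
theorem finsum_orderedDecompositions_eq_single {k A : Type*} [DivisionSemiring k] [Semiring A]
    [Module k A] (Y : M → A) {lam : M} (hlam : lam ≠ 0)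
    (hY : ∀ l ∈ orderedDecompositions lam, l ≠ [lam] → ∃ β ∈ l, Y β = 0) :
    ∑ᶠ l ∈ orderedDecompositions lam, ((l.length ! : k)⁻¹) • (l.map Y).prod = Y lam := by
  have hsingle : ∀ l ≠ [lam], (orderedDecompositions lam).indicator
      (fun l => ((l.length ! : k)⁻¹) • (l.map Y).prod) l = 0 := by
    intro l hne
    refine Set.indicator_apply_eq_zero.mpr fun hl => ?_
    obtain ⟨β, hβl, hYβ⟩ := hY l hl hne
    rw [List.prod_eq_zero (hYβ ▸ List.mem_map_of_mem hβl), smul_zero]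
  rw [finsum_mem_def, finsum_eq_single _ [lam] hsingle,
    Set.indicator_of_mem (singleton_mem_orderedDecompositions hlam)]
  simp

end OrderedDecompositions

theorem graded_exponential_support_general
    {ι k A : Type*} [Field k]
    [Ring A] [Algebra k A]
    (Y : (ι →₀ ℕ) → A)
    (T : Set (ι →₀ ℕ))
    (hTdec : ∀ lam : ι →₀ ℕ, lam ∉ T → lam ≠ 0 →
      ∀ l : List (ι →₀ ℕ), l ≠ [] → (∀ β ∈ l, β ≠ 0) → l.sum = lam →
        ∃ β ∈ l, β ∉ T)
    (hsum : ∀ lam : ι →₀ ℕ, lam ∉ T → lam ≠ 0 →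
      (∑ᶠ l ∈ {l : List (ι →₀ ℕ) | l ≠ [] ∧ (∀ β ∈ l, β ≠ 0) ∧ l.sum = lam},
        ((l.length.factorial : k)⁻¹) • (l.map Y).prod) = 0) :
    ∀ lam : ι →₀ ℕ, lam ∉ T → lam ≠ 0 → Y lam = 0 := by
  intro lam
  induction lam using WellFoundedLT.induction with
  | _ lam ih =>
    intro hT hlam
    have hvanish : ∀ l ∈ orderedDecompositions lam, l ≠ [lam] → ∃ β ∈ l, Y β = 0 := by
      intro l hl hne
      obtain ⟨β, hβl, hβT⟩ := hTdec lam hT hlam l hl.1 hl.2.1 hl.2.2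
      exact ⟨β, hβl, ih β (lt_of_mem_orderedDecompositions hl hne hβl) hβT (hl.2.1 β hβl)⟩
    rw [← finsum_orderedDecompositions_eq_single (k := k) Y hlam hvanish]
    exact hsum lam hT hlam

/-- Let `Q⁺ = ι →₀ ℕ` be the free commutative monoid on a finite set
of simple roots, `A = ⊕_{β ∈ Q⁺} A_β` a `Q⁺`-graded algebra over a field of
characteristic `0` with `A_0 = k`, and `Y = (Y_β)_{β ≠ 0}` a family with `Y_β ∈ A_β`.
Let `T ⊆ Q⁺ \ {0}` be such that every decomposition of any `λ ∉ T ∪ {0}` into nonzero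
parts has a part outside `T`.  If for every `λ ∉ T ∪ {0}` the (finite) sum
`Σ_{k ≥ 1} (1/k!) Σ_{β₁+⋯+β_k = λ, β_j ≠ 0} Y_{β₁}⋯Y_{β_k}` vanishes, then `Y_λ = 0`
for all `λ ∉ T ∪ {0}`. -/
theorem graded_exponential_support
    {ι k A : Type*} [Finite ι] [DecidableEq ι] [Field k] [CharZero k]
    [Ring A] [Algebra k A]
    (𝒜 : (ι →₀ ℕ) → Submodule k A)
    (h1 : 𝒜 0 = 1)
    (hmul : ∀ β γ : ι →₀ ℕ, ∀ x ∈ 𝒜 β, ∀ y ∈ 𝒜 γ, x * y ∈ 𝒜 (β + γ))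
    (hinternal : DirectSum.IsInternal 𝒜)
    (Y : (ι →₀ ℕ) → A) (hY : ∀ β : ι →₀ ℕ, β ≠ 0 → Y β ∈ 𝒜 β)
    (T : Set (ι →₀ ℕ)) (h0T : (0 : ι →₀ ℕ) ∉ T)
    (hTdec : ∀ lam : ι →₀ ℕ, lam ∉ T → lam ≠ 0 →
      ∀ l : List (ι →₀ ℕ), l ≠ [] → (∀ β ∈ l, β ≠ 0) → l.sum = lam →
        ∃ β ∈ l, β ∉ T)
    (hsum : ∀ lam : ι →₀ ℕ, lam ∉ T → lam ≠ 0 →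
      (∑ᶠ l ∈ {l : List (ι →₀ ℕ) | l ≠ [] ∧ (∀ β ∈ l, β ≠ 0) ∧ l.sum = lam},
        ((l.length.factorial : k)⁻¹) • (l.map Y).prod) = 0) :
    ∀ lam : ι →₀ ℕ, lam ∉ T → lam ≠ 0 → Y lam = 0 :=
  graded_exponential_support_general Y T hTdec hsum
end
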